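/- arXiv:1112.3746 — 6 statements merged into one kernel-verified Lean document; each statement's English description precedes it below -/
import Mathlib

section
/- Let f : ℝ → ℝ be infinitely differentiable (C^∞), let n be a natural number, and let t ≠ 0 be a real number. Then D'(n){f'}(t) equals the derivative of the function D(n){f} at t, where f' denotes the derivative of f. -/
/-- The operator `D(n){f} = ((1/t) d/dt)^n f`:
`D(0){f} = f` and `D(n+1){f}(t) = (d/dt D(n){f})(t) / t`. -/
noncomputable def Dlow : ℕ → (ℝ → ℝ) → (ℝ → ℝ)
  | 0, f => f
  | n + 1, f => fun t => deriv (Dlow n f) t / t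

/-- The operator `D'(n)`: `D'(0){f} = f` and `D'(n+1){f}(t) = d/dt (D'(n){f}(t) / t)`. -/
noncomputable def Dup : ℕ → (ℝ → ℝ) → (ℝ → ℝ)
  | 0, f => f
  | n + 1, f => deriv (fun t => Dup n f t / t)

theorem Dup_deriv_eq_deriv_Dlow (f : ℝ → ℝ) (hf : ContDiff ℝ (⊤ : ℕ∞) f) (n : ℕ)
    (t : ℝ) (ht : t ≠ 0) :
    Dup n (deriv f) t = deriv (Dlow n f) t := by
  induction n generalizing t with
  | zero => rfl
  | succ n ih =>
    have h : (fun s => Dup n (deriv f) s / s) =ᶠ[nhds t] (fun s => deriv (Dlow n f) s / s) := by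
      filter_upwards [isOpen_ne.mem_nhds ht] with s hs
      rw [ih s hs]
    show deriv (fun s => Dup n (deriv f) s / s) t = deriv (Dlow (n+1) f) t
    rw [h.deriv_eq]
    rfl
end

section
/- Let f : ℝ → ℝ be infinitely differentiable (C^∞), let n be a natural number, and let t ≠ 0 be a real number. Then D(n){f'}(t) − (d/dt D'(n){f})(t) = (2n/t)·D'(n){f}(t), where f' denotes the derivative of f. -/
lemma contDiffOn_Dup (f : ℝ → ℝ) (hf : ContDiff ℝ (⊤ : ℕ∞) f) :
    ∀ n, ContDiffOn ℝ (⊤ : ℕ∞) (Dup n f) {x : ℝ | x ≠ 0}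
  | 0 => hf.contDiffOn
  | n + 1 => by
    have ih := contDiffOn_Dup f hf n
    have h : ContDiffOn ℝ (⊤ : ℕ∞) (fun t => Dup n f t / t) {x : ℝ | x ≠ 0} :=
      ih.div contDiffOn_id (fun x hx => hx)
    exact h.deriv_of_isOpen isOpen_ne (by simp)

lemma contDiffOn_Dlow (g : ℝ → ℝ) (hg : ContDiff ℝ (⊤ : ℕ∞) g) :
    ∀ n, ContDiffOn ℝ (⊤ : ℕ∞) (Dlow n g) {x : ℝ | x ≠ 0}
  | 0 => hg.contDiffOn
  | n + 1 => by
    have ih := contDiffOn_Dlow g hg n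
    exact (ih.deriv_of_isOpen isOpen_ne (by simp)).div contDiffOn_id (fun x hx => hx)

lemma diffAt_of_cd {g : ℝ → ℝ} (h : ContDiffOn ℝ (⊤ : ℕ∞) g {x : ℝ | x ≠ 0})
    {s : ℝ} (hs : s ≠ 0) : DifferentiableAt ℝ g s :=
  (h.contDiffAt (isOpen_ne.mem_nhds hs)).differentiableAt (by simp)

theorem Dlow_deriv_sub_deriv_Dup (f : ℝ → ℝ) (hf : ContDiff ℝ (⊤ : ℕ∞) f) (n : ℕ)
    (t : ℝ) (ht : t ≠ 0) :
    Dlow n (deriv f) t - deriv (Dup n f) t = 2 * (n : ℝ) / t * Dup n f t := by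
  have hfi : ContDiff ℝ (⊤ : ℕ∞) f := hf.of_le (by simp)
  have hf' : ContDiff ℝ (⊤ : ℕ∞) (deriv f) := (contDiff_infty_iff_deriv.mp hfi).2
  induction n generalizing t ht with
  | zero => simp [Dlow, Dup]
  | succ n ih =>
    set B := Dup n f with hBdef
    have hB : ContDiffOn ℝ (⊤ : ℕ∞) B {x : ℝ | x ≠ 0} := contDiffOn_Dup f hfi n
    have hB' : ContDiffOn ℝ (⊤ : ℕ∞) (deriv B) {x : ℝ | x ≠ 0} :=
      hB.deriv_of_isOpen isOpen_ne (by simp)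
    have hBt : DifferentiableAt ℝ B t := diffAt_of_cd hB ht
    have hB't : DifferentiableAt ℝ (deriv B) t := diffAt_of_cd hB' ht
    -- derivative of the IH-identity
    have E : (fun s => Dlow n (deriv f) s) =ᶠ[nhds t]
        (fun s => deriv B s + 2 * (n : ℝ) * s⁻¹ * B s) := by
      filter_upwards [isOpen_ne.mem_nhds ht] with s hs
      have := ih s hs
      rw [div_eq_mul_inv] at this
      linarith [this]
    have h1 : HasDerivAt (deriv B) (deriv (deriv B) t) t := hB't.hasDerivAt
    have h2 : HasDerivAt (fun s : ℝ => 2 * (n : ℝ) * s⁻¹)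
        (2 * (n : ℝ) * (-(t ^ 2)⁻¹)) t := (hasDerivAt_inv ht).const_mul _
    have h3 := h2.mul hBt.hasDerivAt
    have hderivA : deriv (Dlow n (deriv f)) t =
        deriv (deriv B) t + (2 * (n : ℝ) * (-(t ^ 2)⁻¹) * B t
          + 2 * (n : ℝ) * t⁻¹ * deriv B t) := by
      rw [E.deriv_eq]
      exact (h1.add h3).deriv
    -- formula for Dup (n+1) f on the punctured line
    have F : ∀ s : ℝ, s ≠ 0 → Dup (n + 1) f s = deriv B s / s - B s / s ^ 2 := by
      intro s hs
      have hBs : DifferentiableAt ℝ B s := diffAt_of_cd hB hs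
      have := hBs.hasDerivAt.div (hasDerivAt_id s) hs
      have h2 : HasDerivAt (fun u => B u / u) ((deriv B s * s - B s * 1) / s ^ 2) s := by
        exact this
      show deriv (fun u => B u / u) s = _
      rw [h2.deriv]
      field_simp
    have F' : (Dup (n + 1) f) =ᶠ[nhds t]
        (fun s => deriv B s / s - B s / s ^ 2) := by
      filter_upwards [isOpen_ne.mem_nhds ht] with s hs using F s hs
    have G1 : HasDerivAt (fun s => deriv B s / s)
        ((deriv (deriv B) t * t - deriv B t * 1) / t ^ 2) t :=
      hB't.hasDerivAt.div (hasDerivAt_id t) ht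
    have G2 : HasDerivAt (fun s => B s / s ^ 2)
        ((deriv B t * t ^ 2 - B t * ((2 : ℕ) * t ^ 1)) / (t ^ 2) ^ 2) t :=
      hBt.hasDerivAt.div (hasDerivAt_pow 2 t) (pow_ne_zero 2 ht)
    have hderivDup : deriv (Dup (n + 1) f) t =
        (deriv (deriv B) t * t - deriv B t * 1) / t ^ 2
          - (deriv B t * t ^ 2 - B t * ((2 : ℕ) * t ^ 1)) / (t ^ 2) ^ 2 := by
      rw [F'.deriv_eq]
      exact (G1.sub G2).deriv
    have hDlow : Dlow (n + 1) (deriv f) t = deriv (Dlow n (deriv f)) t / t := rfl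
    rw [hDlow, hderivA, hderivDup, F t ht]
    push_cast
    field_simp
    ring
end

section
/- Let f : ℝ → ℝ be infinitely differentiable (C^∞), let n be a natural number, and let t ≠ 0 be a real number. Then the second derivative of D'(n){f} at t equals D'(n){f''}(t) − 2n·D'(n+1){f}(t), where f'' denotes the second derivative of f. -/
open Filter Topology
open scoped ContDiff

private lemma S_open : IsOpen {x : ℝ | x ≠ 0} := isOpen_compl_singleton

private lemma derivSmooth {p : ℝ → ℝ} (hp : ContDiffOn ℝ ∞ p {x : ℝ | x ≠ 0}) :
    ContDiffOn ℝ ∞ (deriv p) {x : ℝ | x ≠ 0} :=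
  hp.deriv_of_isOpen S_open (le_of_eq rfl)

private lemma divSmooth {p : ℝ → ℝ} (hp : ContDiffOn ℝ ∞ p {x : ℝ | x ≠ 0}) :
    ContDiffOn ℝ ∞ (fun x => p x / x) {x : ℝ | x ≠ 0} :=
  hp.div contDiffOn_id (fun _ hx => hx)

private lemma DupSmooth (f : ℝ → ℝ) (hf : ContDiff ℝ ∞ f) (n : ℕ) :
    ContDiffOn ℝ ∞ (Dup n f) {x : ℝ | x ≠ 0} := by
  induction n with
  | zero => exact hf.contDiffOn
  | succ n ih => exact derivSmooth (divSmooth ih)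

private lemma diffAt {p : ℝ → ℝ} (hp : ContDiffOn ℝ ∞ p {x : ℝ | x ≠ 0})
    {x : ℝ} (hx : x ≠ 0) : DifferentiableAt ℝ p x :=
  (hp.contDiffAt (S_open.mem_nhds hx)).differentiableAt (by simp)

private lemma deriv_congr_ne {p q : ℝ → ℝ} (h : ∀ x : ℝ, x ≠ 0 → p x = q x)
    {t : ℝ} (ht : t ≠ 0) : deriv p t = deriv q t := by
  apply Filter.EventuallyEq.deriv_eq
  filter_upwards [S_open.mem_nhds ht] with x hx using h x hx

private lemma hdiv1 {p : ℝ → ℝ} {t : ℝ} (ht : t ≠ 0) (hp : DifferentiableAt ℝ p t) :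
    deriv (fun x => p x / x) t = deriv p t / t - p t / t ^ 2 := by
  rw [deriv_fun_div hp differentiableAt_fun_id ht]
  simp only [deriv_id'']
  field_simp

private lemma hdiv2 {p : ℝ → ℝ} {t : ℝ} (ht : t ≠ 0) (hp : DifferentiableAt ℝ p t) :
    deriv (fun x => p x / x ^ 2) t = deriv p t / t ^ 2 - 2 * p t / t ^ 3 := by
  rw [deriv_fun_div hp (differentiableAt_pow 2) (pow_ne_zero 2 ht)]
  simp only [deriv_pow_field]
  field_simp
  ring

private lemma hdiv3 {p : ℝ → ℝ} {t : ℝ} (ht : t ≠ 0) (hp : DifferentiableAt ℝ p t) :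
    deriv (fun x => p x / x ^ 3) t = deriv p t / t ^ 3 - 3 * p t / t ^ 4 := by
  rw [deriv_fun_div hp (differentiableAt_pow 3) (pow_ne_zero 3 ht)]
  simp only [deriv_pow_field]
  field_simp
  ring

theorem second_deriv_Dup (f : ℝ → ℝ) (hf : ContDiff ℝ (⊤ : ℕ∞) f) (n : ℕ) (t : ℝ) (ht : t ≠ 0) :
    deriv (deriv (Dup n f)) t
      = Dup n (deriv (deriv f)) t - 2 * (n : ℝ) * Dup (n + 1) f t := by
  induction n generalizing t with
  | zero => simp [Dup]
  | succ n ih =>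
    have hf' : ContDiff ℝ ∞ f := hf.of_le (by simp)
    have hf1 : ContDiff ℝ ∞ (deriv f) := (contDiff_infty_iff_deriv.mp hf').2
    have hf2 : ContDiff ℝ ∞ (deriv (deriv f)) := (contDiff_infty_iff_deriv.mp hf1).2
    set g := Dup n f with hgdef
    have hg : ContDiffOn ℝ ∞ g {x : ℝ | x ≠ 0} := DupSmooth f hf' n
    have hg1 : ContDiffOn ℝ ∞ (deriv g) {x : ℝ | x ≠ 0} := derivSmooth hg
    have hg2 : ContDiffOn ℝ ∞ (deriv (deriv g)) {x : ℝ | x ≠ 0} := derivSmooth hg1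
    have hG : ContDiffOn ℝ ∞ (Dup n (deriv (deriv f))) {x : ℝ | x ≠ 0} :=
      DupSmooth _ hf2 n
    have hh : ContDiffOn ℝ ∞ (Dup (n + 1) f) {x : ℝ | x ≠ 0} := DupSmooth f hf' (n + 1)
    -- A : first-level expansion
    have eqA : ∀ x : ℝ, x ≠ 0 → Dup (n + 1) f x = deriv g x / x - g x / x ^ 2 := by
      intro x hx
      show deriv (fun y => g y / y) x = _
      exact hdiv1 hx (diffAt hg hx)
    -- B : derivative of Dup (n+1) f
    have eqB : ∀ x : ℝ, x ≠ 0 → deriv (Dup (n + 1) f) x =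
        deriv (deriv g) x / x - 2 * deriv g x / x ^ 2 + 2 * g x / x ^ 3 := by
      intro x hx
      have h1 : deriv (Dup (n + 1) f) x
          = deriv (fun y => deriv g y / y - g y / y ^ 2) x := deriv_congr_ne eqA hx
      have d1 : DifferentiableAt ℝ (fun y => deriv g y / y) x :=
        (diffAt hg1 hx).div differentiableAt_fun_id hx
      have d2 : DifferentiableAt ℝ (fun y => g y / y ^ 2) x :=
        (diffAt hg hx).div (differentiableAt_pow 2) (pow_ne_zero 2 hx)
      rw [h1, deriv_fun_sub d1 d2, hdiv1 hx (diffAt hg1 hx), hdiv2 hx (diffAt hg hx)]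
      ring
    -- C : second derivative of Dup (n+1) f at t
    have eqC : deriv (deriv (Dup (n + 1) f)) t =
        deriv (deriv (deriv g)) t / t - 3 * deriv (deriv g) t / t ^ 2
          + 6 * deriv g t / t ^ 3 - 6 * g t / t ^ 4 := by
      have h1 : deriv (deriv (Dup (n + 1) f)) t
          = deriv (fun y => deriv (deriv g) y / y - 2 * deriv g y / y ^ 2
              + 2 * g y / y ^ 3) t := deriv_congr_ne eqB ht
      have d1 : DifferentiableAt ℝ (fun y => deriv (deriv g) y / y) t :=
        (diffAt hg2 ht).div differentiableAt_fun_id ht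
      have d2 : DifferentiableAt ℝ (fun y => 2 * deriv g y / y ^ 2) t :=
        ((diffAt hg1 ht).const_mul 2).div (differentiableAt_pow 2) (pow_ne_zero 2 ht)
      have d3 : DifferentiableAt ℝ (fun y => 2 * g y / y ^ 3) t :=
        ((diffAt hg ht).const_mul 2).div (differentiableAt_pow 3) (pow_ne_zero 3 ht)
      have e2 : deriv (fun y => 2 * deriv g y / y ^ 2) t
          = 2 * deriv (deriv g) t / t ^ 2 - 2 * (2 * deriv g t) / t ^ 3 := by
        rw [hdiv2 ht ((diffAt hg1 ht).const_mul 2),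
          deriv_const_mul 2 (diffAt hg1 ht)]
      have e3 : deriv (fun y => 2 * g y / y ^ 3) t
          = 2 * deriv g t / t ^ 3 - 3 * (2 * g t) / t ^ 4 := by
        rw [hdiv3 ht ((diffAt hg ht).const_mul 2),
          deriv_const_mul 2 (diffAt hg ht)]
      rw [h1, deriv_fun_add (d1.fun_sub d2) d3, deriv_fun_sub d1 d2,
        hdiv1 ht (diffAt hg2 ht), e2, e3]
      ring
    -- IH, pointwise on S
    have eqIH : ∀ x : ℝ, x ≠ 0 → deriv (deriv g) x
        = Dup n (deriv (deriv f)) x - 2 * (n : ℝ) * Dup (n + 1) f x := fun x hx => ih x hx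
    -- third derivative of g via IH
    have eqD : deriv (deriv (deriv g)) t
        = deriv (Dup n (deriv (deriv f))) t - 2 * (n : ℝ) * deriv (Dup (n + 1) f) t := by
      have h1 : deriv (deriv (deriv g)) t
          = deriv (fun x => Dup n (deriv (deriv f)) x
              - 2 * (n : ℝ) * Dup (n + 1) f x) t := deriv_congr_ne eqIH ht
      rw [h1, deriv_fun_sub (diffAt hG ht) ((diffAt hh ht).const_mul _),
        deriv_const_mul _ (diffAt hh ht)]
    have hGt : Dup n (deriv (deriv f)) t
        = deriv (deriv g) t + 2 * (n : ℝ) * Dup (n + 1) f t := by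
      have := eqIH t ht; linarith
    have hGt' : deriv (Dup n (deriv (deriv f))) t
        = deriv (deriv (deriv g)) t + 2 * (n : ℝ) * deriv (Dup (n + 1) f) t := by
      linarith [eqD]
    -- RHS pieces
    have eqE : Dup (n + 1) (deriv (deriv f)) t
        = deriv (Dup n (deriv (deriv f))) t / t - Dup n (deriv (deriv f)) t / t ^ 2 := by
      show deriv (fun y => Dup n (deriv (deriv f)) y / y) t = _
      exact hdiv1 ht (diffAt hG ht)
    have eqF : Dup (n + 1 + 1) f t
        = deriv (Dup (n + 1) f) t / t - Dup (n + 1) f t / t ^ 2 := by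
      show deriv (fun y => Dup (n + 1) f y / y) t = _
      exact hdiv1 ht (diffAt hh ht)
    rw [eqC, eqE, eqF, hGt', hGt, eqB t ht, eqA t ht]
    have htp : (t : ℝ) ^ 4 ≠ 0 := pow_ne_zero 4 ht
    push_cast
    field_simp
    ring
end

section
/- Let m ≥ 1 and k be natural numbers. Let P : EuclideanSpace ℝ (Fin m) → ℝ be a C^∞ function that is harmonic (its Laplacian vanishes identically on ℝ^m ∖ {0}) and positively homogeneous of degree k (P(t•x) = t^k·P(x) for all t > 0 and all x). Let g : ℝ × ℝ → ℝ be C^∞. Define F : ℝ × EuclideanSpace ℝ (Fin m) → ℝ by F(x₀, x) = g(x₀, ‖x‖)·P(x). Then for every x₀ ∈ ℝ and every x ≠ 0, the Laplacian of F at (x₀, x) equals ( ∂₁²g(x₀,‖x‖) + ∂₂²g(x₀,‖x‖) + ((2k+m−1)/‖x‖)·∂₂g(x₀,‖x‖) )·P(x). -/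
open Finset

set_option maxHeartbeats 1000000

/-- Second directional derivative of `F` in the direction `v` at the point `p`. -/
noncomputable def dirDeriv2 {E : Type*} [NormedAddCommGroup E] [NormedSpace ℝ E]
    (F : E → ℝ) (v : E) (p : E) : ℝ :=
  fderiv ℝ (fun q => fderiv ℝ F q v) p v

/-- Laplacian on `EuclideanSpace ℝ (Fin m)`: the sum of the second partial
derivatives with respect to the standard orthonormal basis. -/
noncomputable def lapE (m : ℕ) (P : EuclideanSpace ℝ (Fin m) → ℝ)
    (x : EuclideanSpace ℝ (Fin m)) : ℝ :=
  ∑ i : Fin m, dirDeriv2 P (EuclideanSpace.single i 1) x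

/-- Laplacian on the inner product space `ℝ × EuclideanSpace ℝ (Fin m)`: the sum
of the second partial derivatives with respect to an orthonormal basis, i.e.
`∂²_{x₀}` plus the Laplacian in the `x`-variable. -/
noncomputable def lapProd (m : ℕ) (F : ℝ × EuclideanSpace ℝ (Fin m) → ℝ)
    (p : ℝ × EuclideanSpace ℝ (Fin m)) : ℝ :=
  dirDeriv2 F (1, 0) p + ∑ i : Fin m, dirDeriv2 F (0, EuclideanSpace.single i 1) p

lemma hasDerivAt_fderiv_line {E : Type*} [NormedAddCommGroup E] [NormedSpace ℝ E]
    {F : E → ℝ} {p : E} (h1 : ContDiffAt ℝ 1 (fderiv ℝ F) p) (v : E) :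
    HasDerivAt (fun t : ℝ => fderiv ℝ F (p + t • v) v) (dirDeriv2 F v p) 0 := by
  have hline : HasDerivAt (fun s : ℝ => p + s • v) v 0 := by
    simpa using ((hasDerivAt_id (0:ℝ)).smul_const v).const_add p
  have hψ : DifferentiableAt ℝ (fun q => fderiv ℝ F q v) p :=
    (h1.clm_apply contDiffAt_const).differentiableAt one_ne_zero
  have h0 : HasFDerivAt (fun q => fderiv ℝ F q v)
      (fderiv ℝ (fun q => fderiv ℝ F q v) p) (p + (0:ℝ) • v) := by
    simpa using hψ.hasFDerivAt
  simpa [dirDeriv2, Function.comp_def] using h0.comp_hasDerivAt 0 hline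

lemma dirDeriv2_eq_line {E : Type*} [NormedAddCommGroup E] [NormedSpace ℝ E]
    {F : E → ℝ} {U : Set E} (hU : IsOpen U) (hF : ContDiffOn ℝ 2 F U)
    {p : E} (hp : p ∈ U) (v : E) :
    dirDeriv2 F v p = deriv (deriv (fun t : ℝ => F (p + t • v))) 0 := by
  have hline : ∀ t : ℝ, HasDerivAt (fun s : ℝ => p + s • v) v t := fun t => by
    simpa using ((hasDerivAt_id t).smul_const v).const_add p
  have hcont : Continuous (fun t : ℝ => p + t • v) := by continuity
  have hmem : ∀ᶠ t : ℝ in nhds 0, p + t • v ∈ U := by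
    have := hcont.continuousAt (x := (0:ℝ))
    exact this.preimage_mem_nhds (hU.mem_nhds (by simpa using hp))
  have hev : (fun t : ℝ => fderiv ℝ F (p + t • v) v) =ᶠ[nhds 0]
      deriv (fun t : ℝ => F (p + t • v)) := by
    filter_upwards [hmem] with t ht
    exact ((((hF.contDiffAt (hU.mem_nhds ht)).differentiableAt
      two_ne_zero).hasFDerivAt.comp_hasDerivAt t (hline t)).deriv).symm
  have h1 : ContDiffAt ℝ 1 (fderiv ℝ F) p :=
    (hF.contDiffAt (hU.mem_nhds hp)).fderiv_right (by norm_num)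
  calc dirDeriv2 F v p = deriv (fun t : ℝ => fderiv ℝ F (p + t • v) v) 0 :=
        (hasDerivAt_fderiv_line h1 v).deriv.symm
    _ = _ := hev.deriv_eq

/-- Euler's identity for positively homogeneous functions. -/
lemma euler_identity {m k : ℕ} {P : EuclideanSpace ℝ (Fin m) → ℝ}
    (hP : Differentiable ℝ P)
    (hPhom : ∀ t : ℝ, 0 < t → ∀ x : EuclideanSpace ℝ (Fin m), P (t • x) = t ^ k * P x)
    (x : EuclideanSpace ℝ (Fin m)) :
    fderiv ℝ P x x = k * P x := by
  have hline : HasDerivAt (fun t : ℝ => t • x) x 1 := by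
    simpa using (hasDerivAt_id (1:ℝ)).smul_const x
  have hd : HasDerivAt (fun t : ℝ => P (t • x)) (fderiv ℝ P x x) 1 := by
    have h0 : HasFDerivAt P (fderiv ℝ P x) ((1:ℝ) • x) := by
      simpa using (hP x).hasFDerivAt
    exact h0.comp_hasDerivAt 1 hline
  have hev : (fun t : ℝ => P (t • x)) =ᶠ[nhds 1] fun t : ℝ => t ^ k * P x := by
    filter_upwards [isOpen_Ioi.mem_nhds (zero_lt_one : (0:ℝ) < 1)] with t ht
    exact hPhom t ht x
  have hd2 : HasDerivAt (fun t : ℝ => t ^ k * P x) ((k : ℝ) * P x) 1 := by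
    simpa using (hasDerivAt_pow k (1:ℝ)).mul_const (P x)
  calc fderiv ℝ P x x = deriv (fun t : ℝ => P (t • x)) 1 := hd.deriv.symm
    _ = deriv (fun t : ℝ => t ^ k * P x) 1 := hev.deriv_eq
    _ = (k : ℝ) * P x := hd2.deriv

theorem laplacian_g_mul_P (m k : ℕ) (hm : 1 ≤ m)
    (P : EuclideanSpace ℝ (Fin m) → ℝ) (hP : ContDiff ℝ (⊤ : ℕ∞) P)
    (hPharm : ∀ x : EuclideanSpace ℝ (Fin m), x ≠ 0 → lapE m P x = 0)
    (hPhom : ∀ t : ℝ, 0 < t → ∀ x : EuclideanSpace ℝ (Fin m), P (t • x) = t ^ k * P x)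
    (g : ℝ × ℝ → ℝ) (hg : ContDiff ℝ (⊤ : ℕ∞) g)
    (x₀ : ℝ) (x : EuclideanSpace ℝ (Fin m)) (hx : x ≠ 0) :
    lapProd m (fun p => g (p.1, ‖p.2‖) * P p.2) (x₀, x)
      = (iteratedDeriv 2 (fun s => g (s, ‖x‖)) x₀
          + iteratedDeriv 2 (fun s => g (x₀, s)) ‖x‖
          + (2 * (k : ℝ) + m - 1) / ‖x‖ * deriv (fun s => g (x₀, s)) ‖x‖) * P x := by
  classical
  have hr : (0:ℝ) < ‖x‖ := norm_pos_iff.mpr hx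
  set r : ℝ := ‖x‖ with hrdef
  have hrne : r ≠ 0 := ne_of_gt hr
  set F : ℝ × EuclideanSpace ℝ (Fin m) → ℝ := fun p => g (p.1, ‖p.2‖) * P p.2 with hFdef
  set G₁ : ℝ → ℝ := fun s => g (s, r) with hG₁def
  set G₂ : ℝ → ℝ := fun s => g (x₀, s) with hG₂def
  have hg2 : ContDiff ℝ 2 g := hg.of_le (WithTop.coe_le_coe.mpr le_top)
  have hP2 : ContDiff ℝ 2 P := hP.of_le (WithTop.coe_le_coe.mpr le_top)
  have hG₁2 : ContDiff ℝ 2 G₁ := hg2.comp (contDiff_id.prodMk contDiff_const)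
  have hG₂2 : ContDiff ℝ 2 G₂ := hg2.comp (contDiff_const.prodMk contDiff_id)
  have hG₁d : Differentiable ℝ G₁ := hG₁2.differentiable two_ne_zero
  have hG₂d : Differentiable ℝ G₂ := hG₂2.differentiable two_ne_zero
  have hG₁' : ContDiff ℝ 1 (deriv G₁) := by
    have : ContDiff ℝ (1+1) G₁ := by norm_num [hG₁2]
    exact (contDiff_succ_iff_deriv.mp this).2.2
  have hG₂' : ContDiff ℝ 1 (deriv G₂) := by
    have : ContDiff ℝ (1+1) G₂ := by norm_num [hG₂2]
    exact (contDiff_succ_iff_deriv.mp this).2.2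
  have h1P : ContDiffAt ℝ 1 (fderiv ℝ P) x := (hP2.contDiffAt).fderiv_right (by norm_num)
  -- the open set where F is smooth
  set U : Set (ℝ × EuclideanSpace ℝ (Fin m)) := {p | p.2 ≠ 0} with hUdef
  have hU : IsOpen U := isOpen_compl_singleton.preimage continuous_snd
  have hpU : ((x₀, x) : ℝ × EuclideanSpace ℝ (Fin m)) ∈ U := hx
  have hFsm : ContDiffOn ℝ 2 F U := by
    intro p hp
    have hn : ContDiffAt ℝ 2 (fun q : ℝ × EuclideanSpace ℝ (Fin m) => ‖q.2‖) p :=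
      (contDiffAt_norm ℝ (hp : p.2 ≠ 0)).comp p contDiffAt_snd
    have hpair : ContDiffAt ℝ 2 (fun q : ℝ × EuclideanSpace ℝ (Fin m) => (q.1, ‖q.2‖)) p :=
      contDiffAt_fst.prodMk hn
    exact ((hg2.contDiffAt.comp p hpair).mul ((hP2.comp contDiff_snd).contDiffAt)).contDiffWithinAt
  -- Part 1 : the x₀-direction
  have hd1 : dirDeriv2 F ((1:ℝ), (0:EuclideanSpace ℝ (Fin m))) (x₀, x)
      = iteratedDeriv 2 G₁ x₀ * P x := by
    rw [dirDeriv2_eq_line hU hFsm hpU]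
    have hline : (fun t : ℝ => F ((x₀, x) + t • ((1:ℝ), (0:EuclideanSpace ℝ (Fin m)))))
        = fun t : ℝ => G₁ (x₀ + t) * P x := by
      funext t
      have hpt : ((x₀, x) + t • ((1:ℝ), (0:EuclideanSpace ℝ (Fin m))) : ℝ × EuclideanSpace ℝ (Fin m)) = (x₀ + t, x) := by
        rw [Prod.smul_mk, smul_zero, Prod.mk_add_mk, add_zero, smul_eq_mul, mul_one]
      rw [hpt]
    rw [hline]
    have e1 : deriv (fun t : ℝ => G₁ (x₀ + t) * P x) = fun t : ℝ => deriv G₁ (x₀ + t) * P x := by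
      funext t
      have hdiff : DifferentiableAt ℝ (fun t : ℝ => G₁ (x₀ + t)) t :=
        (hG₁d _).comp t ((differentiableAt_id).const_add x₀)
      rw [deriv_mul_const hdiff, deriv_comp_const_add]
    rw [e1]
    have hdiff2 : DifferentiableAt ℝ (fun t : ℝ => deriv G₁ (x₀ + t)) 0 :=
      ((hG₁'.differentiable one_ne_zero) _).comp 0 ((differentiableAt_id).const_add x₀)
    rw [deriv_mul_const hdiff2, deriv_comp_const_add]
    rw [iteratedDeriv_succ, iteratedDeriv_one]
    norm_num
  -- Part 2 : the x-directions
  have key : ∀ i : Fin m,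
      dirDeriv2 F ((0:ℝ), EuclideanSpace.single i 1) (x₀, x)
        = (deriv (deriv G₂) r * P x / r^2 - deriv G₂ r * P x / r^3) * (x i)^2
          + (2 * deriv G₂ r / r) * (x i * fderiv ℝ P x (EuclideanSpace.single i 1))
          + g (x₀, r) * dirDeriv2 P (EuclideanSpace.single i 1) x
          + deriv G₂ r * P x / r := by
    intro i
    set e : EuclideanSpace ℝ (Fin m) := EuclideanSpace.single i 1 with hedef
    set c : ℝ := x i with hcdef
    have hx0 : x + (0:ℝ) • e = x := by simp
    -- the norm along the line
    have hn_eq : ∀ t : ℝ, ‖x + t • e‖ = Real.sqrt (r^2 + 2*c*t + t^2) := by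
      intro t
      have h3 : (inner ℝ x (t • e) : ℝ) = t * c := by
        rw [real_inner_smul_right, hedef, EuclideanSpace.inner_single_right]
        simp [hcdef]
      have h4 : ‖t • e‖^2 = t^2 := by
        rw [norm_smul, hedef, EuclideanSpace.norm_single]
        simp [mul_pow, sq_abs]
      have h2 : ‖x + t • e‖^2 = r^2 + 2*c*t + t^2 := by
        rw [norm_add_sq_real, h3, h4, hrdef]; ring
      calc ‖x + t • e‖ = Real.sqrt (‖x + t • e‖^2) := (Real.sqrt_sq (norm_nonneg _)).symm
        _ = _ := by rw [h2]
    set V : Set ℝ := {t : ℝ | x + t • e ≠ 0} with hVdef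
    have hVopen : IsOpen V := by
      have hc : Continuous (fun t : ℝ => x + t • e) := by continuity
      exact isOpen_compl_singleton.preimage hc
    have h0V : (0:ℝ) ∈ V := by simpa [hVdef, hx0] using hx
    have hVmem : V ∈ nhds (0:ℝ) := hVopen.mem_nhds h0V
    have hqpos : ∀ t ∈ V, (0:ℝ) < r^2 + 2*c*t + t^2 := by
      intro t ht
      have h1 : (0:ℝ) < ‖x + t • e‖ := norm_pos_iff.mpr ht
      rw [hn_eq t] at h1
      exact Real.sqrt_pos.mp h1
    have Hn : ∀ t ∈ V, HasDerivAt (fun s : ℝ => ‖x + s • e‖) ((c + t) / ‖x + t • e‖) t := by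
      intro t ht
      have hq : HasDerivAt (fun s : ℝ => r^2 + 2*c*s + s^2) (2*c + 2*t) t := by
        have h1 : HasDerivAt (fun s : ℝ => s^2) (2*t) t := by
          simpa using hasDerivAt_pow 2 t
        have h2 : HasDerivAt (fun s : ℝ => 2*c*s) (2*c) t := by
          simpa using (hasDerivAt_id t).const_mul (2*c)
        exact (h2.const_add (r^2)).add h1
      have hs := (Real.hasDerivAt_sqrt (ne_of_gt (hqpos t ht))).comp t hq
      have hfun : (fun s : ℝ => ‖x + s • e‖) = fun s : ℝ => Real.sqrt (r^2 + 2*c*s + s^2) :=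
        funext hn_eq
      rw [hfun]
      refine hs.congr_deriv ?_
      have hsne : Real.sqrt (r^2 + 2*c*t + t^2) ≠ 0 :=
        ne_of_gt (Real.sqrt_pos.mpr (hqpos t ht))
      rw [hn_eq t]
      field_simp
    have Hw : ∀ t : ℝ, HasDerivAt (fun s : ℝ => P (x + s • e)) (fderiv ℝ P (x + t • e) e) t := by
      intro t
      have hlk : HasDerivAt (fun s : ℝ => x + s • e) e t := by
        simpa using ((hasDerivAt_id t).smul_const e).const_add x
      exact ((hP2.differentiable two_ne_zero) (x + t • e)).hasFDerivAt.comp_hasDerivAt t hlk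
    have HG₂n : ∀ t ∈ V, HasDerivAt (fun s : ℝ => G₂ ‖x + s • e‖)
        (deriv G₂ ‖x + t • e‖ * ((c + t) / ‖x + t • e‖)) t := by
      intro t ht
      exact ((hG₂d _).hasDerivAt).comp t (Hn t ht)
    -- the first derivative, eventually
    have hev : deriv (fun t : ℝ => G₂ ‖x + t • e‖ * P (x + t • e)) =ᶠ[nhds 0]
        fun t : ℝ => deriv G₂ ‖x + t • e‖ * ((c + t) / ‖x + t • e‖) * P (x + t • e)
          + G₂ ‖x + t • e‖ * fderiv ℝ P (x + t • e) e := by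
      filter_upwards [hVmem] with t ht
      exact ((HG₂n t ht).mul (Hw t)).deriv
    -- second derivatives at 0
    have Hn0 : HasDerivAt (fun s : ℝ => ‖x + s • e‖) (c / r) 0 := by
      have := Hn 0 h0V
      simpa [hx0] using this
    have hA : HasDerivAt (fun t : ℝ => deriv G₂ ‖x + t • e‖) (deriv (deriv G₂) r * (c / r)) 0 := by
      have := (((hG₂'.differentiable one_ne_zero) _).hasDerivAt).comp 0 Hn0
      simpa [hx0, Function.comp_def] using this
    have hB : HasDerivAt (fun t : ℝ => (c + t) / ‖x + t • e‖)
        ((1 * r - (c + 0) * (c / r)) / r^2) 0 := by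
      have hnum : HasDerivAt (fun t : ℝ => c + t) 1 0 := (hasDerivAt_id 0).const_add c
      have := hnum.div Hn0 (by rw [hx0]; exact hrne)
      simpa [hx0, Pi.div_def] using this
    have hw0 : HasDerivAt (fun t : ℝ => P (x + t • e)) (fderiv ℝ P x e) 0 := by
      have := Hw 0; simpa [hx0] using this
    have hD : HasDerivAt (fun t : ℝ => G₂ ‖x + t • e‖) (deriv G₂ r * (c / r)) 0 := by
      have := HG₂n 0 h0V; simpa [hx0] using this
    have hE : HasDerivAt (fun t : ℝ => fderiv ℝ P (x + t • e) e)
        (dirDeriv2 P e x) 0 := hasDerivAt_fderiv_line h1P e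
    have Htotal : HasDerivAt
        (fun t : ℝ => deriv G₂ ‖x + t • e‖ * ((c + t) / ‖x + t • e‖) * P (x + t • e)
          + G₂ ‖x + t • e‖ * fderiv ℝ P (x + t • e) e)
        ((deriv (deriv G₂) r * (c / r) * ((c + 0) / ‖x + (0:ℝ) • e‖)
            + deriv G₂ ‖x + (0:ℝ) • e‖ * ((1 * r - (c + 0) * (c / r)) / r^2))
            * P (x + (0:ℝ) • e)
          + deriv G₂ ‖x + (0:ℝ) • e‖ * ((c + 0) / ‖x + (0:ℝ) • e‖) * fderiv ℝ P x e
          + (deriv G₂ r * (c / r) * fderiv ℝ P (x + (0:ℝ) • e) e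
            + G₂ ‖x + (0:ℝ) • e‖ * dirDeriv2 P e x)) 0 :=
      ((hA.mul hB).mul hw0).add (hD.mul hE)
    -- put it together
    have hstep : dirDeriv2 F ((0:ℝ), e) (x₀, x)
        = deriv (deriv (fun t : ℝ => G₂ ‖x + t • e‖ * P (x + t • e))) 0 := by
      rw [dirDeriv2_eq_line hU hFsm hpU]
      have hfun : (fun t : ℝ => F ((x₀, x) + t • ((0:ℝ), e)))
          = fun t : ℝ => G₂ ‖x + t • e‖ * P (x + t • e) := by
        funext t
        have hpt : ((x₀, x) + t • ((0:ℝ), e) : ℝ × EuclideanSpace ℝ (Fin m)) = (x₀, x + t • e) := by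
          rw [Prod.smul_mk, smul_zero, Prod.mk_add_mk, add_zero]
        rw [hpt]
      rw [hfun]
    rw [hstep, hev.deriv_eq, Htotal.deriv, hx0, ← hrdef]
    rw [show G₂ r = g (x₀, r) from rfl]
    field_simp
    ring
  -- the sums
  have S1 : ∑ i : Fin m, (x i)^2 = r^2 := by
    have h := real_inner_self_eq_norm_sq x
    rw [hrdef, ← h]
    simp only [PiLp.inner_apply, RCLike.inner_apply, sq, conj_trivial]
  have hsum_single : (∑ i : Fin m, x i • EuclideanSpace.single i (1:ℝ)) = x := by
    ext j
    rw [WithLp.ofLp_sum, Finset.sum_apply]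
    simp [EuclideanSpace.single_apply, PiLp.smul_apply, smul_eq_mul, mul_ite,
      Finset.sum_ite_eq]
  have S2 : ∑ i : Fin m, x i * fderiv ℝ P x (EuclideanSpace.single i 1) = k * P x := by
    have h1 : ∑ i : Fin m, x i * fderiv ℝ P x (EuclideanSpace.single i 1)
        = fderiv ℝ P x (∑ i : Fin m, x i • EuclideanSpace.single i (1:ℝ)) := by
      rw [map_sum]
      simp [smul_eq_mul]
    rw [h1, hsum_single]
    exact euler_identity (hP.differentiable (by simp)) hPhom x
  have S3 : ∑ i : Fin m, dirDeriv2 P (EuclideanSpace.single i 1) x = 0 := hPharm x hx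
  -- assemble
  rw [show lapProd m F (x₀, x) = dirDeriv2 F ((1:ℝ), (0:EuclideanSpace ℝ (Fin m))) (x₀, x)
      + ∑ i : Fin m, dirDeriv2 F ((0:ℝ), EuclideanSpace.single i 1) (x₀, x) from rfl,
    hd1]
  rw [Finset.sum_congr rfl (fun i _ => key i)]
  rw [Finset.sum_add_distrib, Finset.sum_add_distrib, Finset.sum_add_distrib,
    ← Finset.mul_sum, ← Finset.mul_sum, ← Finset.mul_sum, S1, S2, S3]
  rw [Finset.sum_const, card_univ, Fintype.card_fin, nsmul_eq_mul]
  rw [show iteratedDeriv 2 G₂ r = deriv (deriv G₂) r from by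
    rw [iteratedDeriv_succ, iteratedDeriv_one]]
  rw [show deriv (fun s => g (x₀, s)) r = deriv G₂ r from rfl]
  field_simp
  ring
end

section
/- Let m ≥ 1 and k, l, n, n' be natural numbers. Let P : EuclideanSpace ℝ (Fin m) × EuclideanSpace ℝ (Fin m) → ℝ be a C^∞ function that is harmonic in its first variable and harmonic in its second variable (for each fixed value of the other variable, on the complement of the origin), positively homogeneous of degree k in the first variable and of degree l in the second variable (P(t₁•x, t₂•y) = t₁^k·t₂^l·P(x,y) for all t₁, t₂ > 0). Let h : ℝ⁴ → ℝ be C^∞ on ℝ × (0,∞) × ℝ × (0,∞) and satisfy there ∂₁²h + ∂₂²h = 0 and ∂₃²h + ∂₄²h = 0. Define F(x₀, x, y₀, y) = h(x₀, ‖x‖, y₀, ‖y‖)·P(x, y) for x ≠ 0, y ≠ 0. Then for all x₀, y₀ ∈ ℝ and all x ≠ 0, y ≠ 0, applying the Laplacian in (x₀,x) n times and the Laplacian in (y₀,y) n' times to F yields ( ∏_{j=1}^{n} (2k + m − (2j−1)) )·( ∏_{j=1}^{n'} (2l + m − (2j−1)) ) · D_r(n)D_ρ(n'){h}(x₀, ‖x‖,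 y₀, ‖y‖) · P(x, y). -/
open Finset

/-- Laplacian in the `(x₀, x)`-variables on
`ℝ × EuclideanSpace ℝ (Fin m) × ℝ × EuclideanSpace ℝ (Fin m)` (the `(y₀, y)`-variables
held fixed): the sum of second partial derivatives with respect to an orthonormal
basis of the first factor. -/
noncomputable def lapX (m : ℕ)
    (F : ℝ × EuclideanSpace ℝ (Fin m) × ℝ × EuclideanSpace ℝ (Fin m) → ℝ) :
    ℝ × EuclideanSpace ℝ (Fin m) × ℝ × EuclideanSpace ℝ (Fin m) → ℝ :=
  fun p => dirDeriv2 F (1, 0, 0, 0) p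
    + ∑ i : Fin m, dirDeriv2 F (0, EuclideanSpace.single i 1, 0, 0) p

/-- Laplacian in the `(y₀, y)`-variables (the `(x₀, x)`-variables held fixed). -/
noncomputable def lapY (m : ℕ)
    (F : ℝ × EuclideanSpace ℝ (Fin m) × ℝ × EuclideanSpace ℝ (Fin m) → ℝ) :
    ℝ × EuclideanSpace ℝ (Fin m) × ℝ × EuclideanSpace ℝ (Fin m) → ℝ :=
  fun p => dirDeriv2 F (0, 0, 1, 0) p
    + ∑ i : Fin m, dirDeriv2 F (0, 0, 0, EuclideanSpace.single i 1) p

open Filter Topology Set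
open scoped ContDiff

section Helpers
variable {F : Type*} [NormedAddCommGroup F] [NormedSpace ℝ F]

theorem hasDerivAt_line (f : F → ℝ) (p v : F) (t : ℝ)
    (hf : DifferentiableAt ℝ f (p + t • v)) :
    HasDerivAt (fun s : ℝ => f (p + s • v)) (fderiv ℝ f (p + t • v) v) t := by
  have h1 : HasDerivAt (fun s : ℝ => p + s • v) v t := by
    simpa using ((hasDerivAt_id t).smul_const v).const_add p
  exact hf.hasFDerivAt.comp_hasDerivAt t h1

theorem diffAt_of_smooth {f : F → ℝ} {U : Set F} (hU : IsOpen U)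
    (hf : ContDiffOn ℝ ∞ f U) {q : F} (hq : q ∈ U) : DifferentiableAt ℝ f q :=
  (hf.contDiffAt (hU.mem_nhds hq)).differentiableAt (by norm_cast)

theorem contDiffOn_pd (f : F → ℝ) (U : Set F) (hU : IsOpen U)
    (hf : ContDiffOn ℝ ∞ f U) (v : F) :
    ContDiffOn ℝ ∞ (fun q => fderiv ℝ f q v) U := by
  have h1 : ContDiffOn ℝ ∞ (fderiv ℝ f) U := hf.fderiv_of_isOpen hU (by simp)
  exact (ContinuousLinearMap.apply ℝ ℝ v).contDiff.comp_contDiffOn h1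


theorem dirDeriv2_eq_deriv2_line (f : F → ℝ) (v p : F)
    (h1 : ∀ᶠ q in 𝓝 p, DifferentiableAt ℝ f q)
    (h2 : DifferentiableAt ℝ (fun q => fderiv ℝ f q v) p) :
    dirDeriv2 f v p = deriv (deriv (fun t : ℝ => f (p + t • v))) 0 := by
  have hcont : Tendsto (fun t : ℝ => p + t • v) (𝓝 0) (𝓝 p) := by
    have : Continuous fun t : ℝ => p + t • v := by continuity
    simpa using this.tendsto 0
  have hev : deriv (fun t : ℝ => f (p + t • v))
      =ᶠ[𝓝 (0:ℝ)] fun t => fderiv ℝ f (p + t • v) v := by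
    filter_upwards [hcont.eventually h1] with t ht
    exact (hasDerivAt_line f p v t ht).deriv
  rw [hev.deriv_eq]
  have := (hasDerivAt_line (fun q => fderiv ℝ f q v) p v 0 (by simpa using h2)).deriv
  simp only [zero_smul, add_zero] at this
  rw [this]; rfl

theorem euler_identity_s7 (Q : F → ℝ) (k : ℕ) (x : F) (hQ : DifferentiableAt ℝ Q x)
    (hhom : ∀ t : ℝ, 0 < t → Q (t • x) = t ^ k * Q x) :
    fderiv ℝ Q x x = (k : ℝ) * Q x := by
  have h1 : HasDerivAt (fun t : ℝ => Q (t • x)) (fderiv ℝ Q x x) 1 := by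
    have := hasDerivAt_line Q 0 x 1 (by simpa using hQ)
    simpa using this
  have h2 : HasDerivAt (fun t : ℝ => t ^ k * Q x) ((k : ℝ) * Q x) 1 := by
    simpa using (hasDerivAt_pow k (1:ℝ)).mul_const (Q x)
  have h3 : HasDerivAt (fun t : ℝ => Q (t • x)) ((k:ℝ) * Q x) 1 := by
    apply h2.congr_of_eventuallyEq
    filter_upwards [Ioi_mem_nhds (zero_lt_one)] with t ht
    exact hhom t ht
  exact (h3.unique h1).symm

theorem pd_comm (f : F → ℝ) (U : Set F) (hU : IsOpen U)
    (hf : ContDiffOn ℝ ∞ f U) (p : F) (hp : p ∈ U) (u v : F) :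
    fderiv ℝ (fun q => fderiv ℝ f q u) p v = fderiv ℝ (fun q => fderiv ℝ f q v) p u := by
  have hfa : ContDiffAt ℝ ∞ f p := hf.contDiffAt (hU.mem_nhds hp)
  have hsymm := hfa.isSymmSndFDerivAt (by simp; exact WithTop.coe_le_coe.mpr (le_top : (2:ℕ∞) ≤ ⊤))
  have key : ∀ w : F, fderiv ℝ (fun q => fderiv ℝ f q w) p
      = ((fderiv ℝ (fderiv ℝ f) p).flip w) := by
    intro w
    have hdf : DifferentiableAt ℝ (fderiv ℝ f) p :=
      (hfa.fderiv_right (le_of_eq (show ∞ + 1 = ∞ from rfl))).differentiableAt (by norm_cast)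
    have : (fun q => fderiv ℝ f q w) = fun q => (fderiv ℝ f q) w := rfl
    rw [this, fderiv_clm_apply hdf (differentiableAt_const w)]
    simp
  rw [key u, key v]
  exact hsymm.eq v u ▸ (hsymm v u)

theorem hasDerivAt_comp2 (g : ℝ × ℝ → ℝ) (a : ℝ) (ν : ℝ → ℝ) (ν' : ℝ) (t : ℝ)
    (hg : DifferentiableAt ℝ g (a, ν t)) (hν : HasDerivAt ν ν' t) :
    HasDerivAt (fun s => g (a, ν s)) (fderiv ℝ g (a, ν t) (0,1) * ν') t := by
  have hcurve : HasDerivAt (fun s => ((a, ν s) : ℝ × ℝ)) (((0:ℝ), ν')) t :=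
    (hasDerivAt_const t a).prodMk hν
  have h1 := hg.hasFDerivAt.comp_hasDerivAt t hcurve
  have h2 : ((0:ℝ), ν') = ν' • ((0:ℝ), (1:ℝ)) := by simp
  rw [h2, map_smul] at h1
  rw [smul_eq_mul, mul_comm] at h1
  exact h1

end Helpers

section Core
variable {m : ℕ}

theorem norm_line (x : EuclideanSpace ℝ (Fin m)) (i : Fin m) (t : ℝ) :
    ‖x + t • EuclideanSpace.single i (1:ℝ)‖ = Real.sqrt (‖x‖^2 + 2*(x i)*t + t^2) := by
  have h1 : ‖x + t • EuclideanSpace.single i (1:ℝ)‖^2 = ‖x‖^2 + 2*(x i)*t + t^2 := by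
    rw [norm_add_sq_real, real_inner_smul_right, EuclideanSpace.inner_single_right]
    simp [norm_smul, EuclideanSpace.norm_single]
    ring
  rw [← h1, Real.sqrt_sq (norm_nonneg _)]

theorem line_ne_zero (x : EuclideanSpace ℝ (Fin m)) (i : Fin m) {t : ℝ} (ht : |t| < ‖x‖) :
    x + t • EuclideanSpace.single i (1:ℝ) ≠ 0 := by
  intro hc
  have : x = -(t • EuclideanSpace.single i (1:ℝ)) := eq_neg_of_add_eq_zero_left hc
  have h2 : ‖x‖ = |t| := by
    rw [this]; simp [norm_smul, EuclideanSpace.norm_single, Real.norm_eq_abs]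
  rw [h2] at ht; exact lt_irrefl _ ht

theorem hasDerivAt_norm_line (x : EuclideanSpace ℝ (Fin m)) (i : Fin m) (t : ℝ)
    (hne : x + t • EuclideanSpace.single i (1:ℝ) ≠ 0) :
    HasDerivAt (fun s : ℝ => ‖x + s • EuclideanSpace.single i (1:ℝ)‖)
      ((x i + t) / ‖x + t • EuclideanSpace.single i (1:ℝ)‖) t := by
  have hpos : 0 < ‖x + t • EuclideanSpace.single i (1:ℝ)‖ := norm_pos_iff.mpr hne
  have harg : ‖x‖^2 + 2*(x i)*t + t^2 ≠ 0 := by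
    have := norm_line x i t
    intro hc
    rw [hc, Real.sqrt_zero] at this
    exact absurd (this ▸ hpos) (lt_irrefl 0)
  have hu : HasDerivAt (fun s : ℝ => ‖x‖^2 + 2*(x i)*s + s^2) (2*(x i) + 2*t) t := by
    have h1 : HasDerivAt (fun s : ℝ => 2*(x i)*s) (2*(x i)) t := by
      simpa using (hasDerivAt_id t).const_mul (2*(x i))
    have h2 : HasDerivAt (fun s : ℝ => s^2) (2*t) t := by
      simpa using hasDerivAt_pow 2 t
    have h3 := (h1.add h2).const_add (‖x‖^2)
    have heq2 : (fun s : ℝ => ‖x‖^2 + (2*(x i)*s + s^2)) = fun s : ℝ => ‖x‖^2 + 2*(x i)*s + s^2 := by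
      funext s; ring
    simp only [Pi.add_apply] at h3
    rw [heq2] at h3
    exact h3
  have := (Real.hasDerivAt_sqrt harg).comp t hu
  have heq : (fun s : ℝ => Real.sqrt (‖x‖^2 + 2*(x i)*s + s^2))
      = fun s : ℝ => ‖x + s • EuclideanSpace.single i (1:ℝ)‖ := by
    funext s; rw [norm_line]
  have this2 : HasDerivAt (fun s : ℝ => ‖x + s • EuclideanSpace.single i (1:ℝ)‖)
      (1 / (2 * Real.sqrt (‖x‖ ^ 2 + 2 * x i * t + t ^ 2)) * (2 * x i + 2 * t)) t := by
    apply this.congr_of_eventuallyEq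
    filter_upwards with s
    rw [Function.comp_apply, ← norm_line]
  convert this2 using 1
  rw [norm_line]
  have hs : Real.sqrt (‖x‖ ^ 2 + 2 * x i * t + t ^ 2) ≠ 0 := by
    rw [← norm_line]; positivity
  field_simp
end Core

section CoreSum

theorem core_sum (m k : ℕ) (g : ℝ × ℝ → ℝ)
    (hg : ContDiffOn ℝ ∞ g (Set.univ ×ˢ Set.Ioi (0:ℝ)))
    (Q : EuclideanSpace ℝ (Fin m) → ℝ) (hQ : ContDiff ℝ ∞ Q)
    (x₀ : ℝ) (x : EuclideanSpace ℝ (Fin m)) (hx : x ≠ 0)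
    (hQharm : ∑ i : Fin m, dirDeriv2 Q (EuclideanSpace.single i 1) x = 0)
    (hQE : fderiv ℝ Q x x = (k : ℝ) * Q x) (j : ℝ)
    (hpde : dirDeriv2 g ((1:ℝ),(0:ℝ)) (x₀,‖x‖) + dirDeriv2 g ((0:ℝ),(1:ℝ)) (x₀,‖x‖)
      + 2*j/‖x‖ * fderiv ℝ g (x₀,‖x‖) ((0:ℝ),(1:ℝ)) = 0) :
    dirDeriv2 (fun q : ℝ × EuclideanSpace ℝ (Fin m) => g (q.1, ‖q.2‖) * Q q.2)
        ((1:ℝ), (0:EuclideanSpace ℝ (Fin m))) (x₀,x)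
      + ∑ i : Fin m, dirDeriv2 (fun q : ℝ × EuclideanSpace ℝ (Fin m) => g (q.1, ‖q.2‖) * Q q.2)
          ((0:ℝ), EuclideanSpace.single i 1) (x₀,x)
    = (2*(k:ℝ) + m - 1 - 2*j) * (fderiv ℝ g (x₀,‖x‖) ((0:ℝ),(1:ℝ)) / ‖x‖) * Q x := by
  have hr : 0 < ‖x‖ := norm_pos_iff.mpr hx
  have hrne : ‖x‖ ≠ 0 := ne_of_gt hr
  set Ω : Set (ℝ×ℝ) := Set.univ ×ˢ Set.Ioi (0:ℝ) with hΩdef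
  have hΩo : IsOpen Ω := isOpen_univ.prod isOpen_Ioi
  set G : ℝ × EuclideanSpace ℝ (Fin m) → ℝ := fun q => g (q.1, ‖q.2‖) * Q q.2 with hGdef
  set V : Set (ℝ × EuclideanSpace ℝ (Fin m)) :=
    Set.univ ×ˢ ({(0:EuclideanSpace ℝ (Fin m))}ᶜ) with hVdef
  have hVo : IsOpen V := isOpen_univ.prod isOpen_compl_singleton
  have hmem : (x₀, x) ∈ V := ⟨Set.mem_univ _, hx⟩
  have hQ' : Differentiable ℝ Q := hQ.differentiable (by norm_cast)
  have hGsm : ContDiffOn ℝ ∞ G V := by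
    intro q hq
    have hq2 : q.2 ≠ 0 := hq.2
    have h1 : ContDiffAt ℝ ∞
        (fun q : ℝ × EuclideanSpace ℝ (Fin m) => ((q.1, ‖q.2‖) : ℝ × ℝ)) q :=
      contDiffAt_fst.prodMk ((contDiffAt_norm (𝕜 := ℝ) hq2).comp q contDiffAt_snd)
    have h2 : ContDiffAt ℝ ∞ g (q.1, ‖q.2‖) :=
      hg.contDiffAt (hΩo.mem_nhds ⟨Set.mem_univ _, by simpa using norm_pos_iff.mpr hq2⟩)
    exact ((h2.comp q h1).mul (hQ.contDiffAt.comp q contDiffAt_snd)).contDiffWithinAt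
  have hpdG : ∀ v, DifferentiableAt ℝ (fun q => fderiv ℝ G q v) (x₀,x) :=
    fun v => diffAt_of_smooth hVo (contDiffOn_pd G V hVo hGsm v) hmem
  have hevdiff : ∀ᶠ q in 𝓝 (x₀,x), DifferentiableAt ℝ G q := by
    filter_upwards [hVo.mem_nhds hmem] with q hq
    exact diffAt_of_smooth hVo hGsm hq
  -- direction 0
  have hdir0 : dirDeriv2 G ((1:ℝ),(0:EuclideanSpace ℝ (Fin m))) (x₀,x)
      = dirDeriv2 g ((1:ℝ),(0:ℝ)) (x₀,‖x‖) * Q x := by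
    rw [dirDeriv2_eq_deriv2_line G _ _ hevdiff (hpdG _)]
    have hline : (fun t : ℝ => G ((x₀,x) + t • ((1:ℝ),(0:EuclideanSpace ℝ (Fin m)))))
        = fun t => g ((x₀,‖x‖) + t • ((1:ℝ),(0:ℝ))) * Q x := by
      funext t
      simp [hGdef, Prod.smul_mk, smul_zero, smul_eq_mul, mul_one]
    rw [hline]
    have hev1 : deriv (fun t : ℝ => g ((x₀,‖x‖) + t • ((1:ℝ),(0:ℝ))) * Q x)
        =ᶠ[𝓝 (0:ℝ)] fun t => fderiv ℝ g ((x₀,‖x‖) + t • ((1:ℝ),(0:ℝ))) ((1:ℝ),(0:ℝ)) * Q x := by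
      filter_upwards with t
      have hdg : DifferentiableAt ℝ g ((x₀,‖x‖) + t • ((1:ℝ),(0:ℝ))) := by
        apply diffAt_of_smooth hΩo hg
        constructor
        · exact Set.mem_univ _
        · simpa using hr
      exact ((hasDerivAt_line g _ _ t hdg).mul_const (Q x)).deriv
    rw [hev1.deriv_eq]
    have hpdgd : DifferentiableAt ℝ (fun q => fderiv ℝ g q ((1:ℝ),(0:ℝ)))
        ((x₀,‖x‖) + (0:ℝ) • ((1:ℝ),(0:ℝ))) := by
      simp only [zero_smul, add_zero]
      exact diffAt_of_smooth hΩo (contDiffOn_pd g Ω hΩo hg _) ⟨Set.mem_univ _, hr⟩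
    have hd2 := ((hasDerivAt_line (fun q => fderiv ℝ g q ((1:ℝ),(0:ℝ)))
        (x₀,‖x‖) ((1:ℝ),(0:ℝ)) 0 hpdgd).mul_const (Q x)).deriv
    rw [hd2]
    simp [dirDeriv2]
  have hdiri : ∀ i : Fin m, dirDeriv2 G ((0:ℝ), EuclideanSpace.single i 1) (x₀,x)
      = (dirDeriv2 g ((0:ℝ),(1:ℝ)) (x₀,‖x‖) * Q x / ‖x‖^2
          - fderiv ℝ g (x₀,‖x‖) ((0:ℝ),(1:ℝ)) * Q x / ‖x‖^3) * (x i)^2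
        + (2 * fderiv ℝ g (x₀,‖x‖) ((0:ℝ),(1:ℝ)) / ‖x‖)
            * (x i * fderiv ℝ Q x (EuclideanSpace.single i 1))
        + g (x₀,‖x‖) * dirDeriv2 Q (EuclideanSpace.single i 1) x
        + fderiv ℝ g (x₀,‖x‖) ((0:ℝ),(1:ℝ)) * Q x / ‖x‖ := by
    intro i
    set v : EuclideanSpace ℝ (Fin m) := EuclideanSpace.single i 1 with hvdef
    rw [dirDeriv2_eq_deriv2_line G _ _ hevdiff (hpdG _)]
    have hline : (fun t : ℝ => G ((x₀,x) + t • ((0:ℝ), v)))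
        = fun t => g (x₀, ‖x + t • v‖) * Q (x + t • v) := by
      funext t
      simp [hGdef, Prod.smul_mk, smul_zero]
    rw [hline]
    have hev1 : deriv (fun t : ℝ => g (x₀, ‖x + t • v‖) * Q (x + t • v))
        =ᶠ[𝓝 (0:ℝ)] fun t => fderiv ℝ g (x₀, ‖x + t • v‖) ((0:ℝ),(1:ℝ))
            * ((x i + t) / ‖x + t • v‖) * Q (x + t • v)
          + g (x₀, ‖x + t • v‖) * fderiv ℝ Q (x + t • v) v := by
      filter_upwards [Ioo_mem_nhds (neg_neg_iff_pos.mpr hr : -‖x‖ < 0) hr] with t ht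
      have hne : x + t • v ≠ 0 := line_ne_zero x i (abs_lt.mpr ⟨ht.1, ht.2⟩)
      have hν := hasDerivAt_norm_line x i t hne
      have hgd : DifferentiableAt ℝ g (x₀, ‖x + t • v‖) :=
        diffAt_of_smooth hΩo hg ⟨Set.mem_univ _, norm_pos_iff.mpr hne⟩
      have hDd := hasDerivAt_comp2 g x₀ (fun s => ‖x + s • v‖) _ t hgd hν
      have hC := hasDerivAt_line Q x v t hQ'.differentiableAt
      exact (hDd.mul hC).deriv
    rw [hev1.deriv_eq]
    have hne0 : x + (0:ℝ) • v ≠ 0 := by simpa using hx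
    have hν0 := hasDerivAt_norm_line x i 0 hne0
    have hpd2gd : DifferentiableAt ℝ (fun q => fderiv ℝ g q ((0:ℝ),(1:ℝ)))
        (x₀, ‖x + (0:ℝ) • v‖) := by
      simp only [zero_smul, add_zero]
      exact diffAt_of_smooth hΩo (contDiffOn_pd g Ω hΩo hg _) ⟨Set.mem_univ _, hr⟩
    have hA := hasDerivAt_comp2 (fun q => fderiv ℝ g q ((0:ℝ),(1:ℝ))) x₀
      (fun s => ‖x + s • v‖) _ 0 hpd2gd hν0
    have hB := ((hasDerivAt_id (0:ℝ)).const_add (x i)).div hν0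
      (by simp only [zero_smul, add_zero]; exact hrne)
    have hgd0 : DifferentiableAt ℝ g (x₀, ‖x + (0:ℝ) • v‖) := by
      simp only [zero_smul, add_zero]
      exact diffAt_of_smooth hΩo hg ⟨Set.mem_univ _, hr⟩
    have hDd0 := hasDerivAt_comp2 g x₀ (fun s => ‖x + s • v‖) _ 0 hgd0 hν0
    have hC0 := hasDerivAt_line Q x v 0 hQ'.differentiableAt
    have hpdQ : DifferentiableAt ℝ (fun z => fderiv ℝ Q z v) (x + (0:ℝ) • v) := by
      have hc : ContDiff ℝ ∞ (fun z => fderiv ℝ Q z v) :=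
        (ContinuousLinearMap.apply ℝ ℝ v).contDiff.comp
          (hQ.fderiv_right (le_of_eq (show ∞ + 1 = ∞ from rfl)))
      exact (hc.differentiable (by norm_cast)) _
    have hE := hasDerivAt_line (fun z => fderiv ℝ Q z v) x v 0 hpdQ
    refine ((((hA.mul hB).mul hC0).add (hDd0.mul hE)).deriv).trans ?_
    rw [show dirDeriv2 g ((0:ℝ),(1:ℝ)) (x₀,‖x‖)
        = fderiv ℝ (fun q => fderiv ℝ g q ((0:ℝ),(1:ℝ))) (x₀,‖x‖) ((0:ℝ),(1:ℝ)) from rfl,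
      show dirDeriv2 Q v x = fderiv ℝ (fun z => fderiv ℝ Q z v) x v from rfl]
    simp only [Pi.mul_apply, Pi.div_apply, Pi.add_apply, zero_smul, add_zero, id_eq, one_mul, mul_one]
    field_simp
    ring
  have hS2 : ∑ i : Fin m, (x i)^2 = ‖x‖^2 := by
    have hn : ‖x‖ = Real.sqrt (∑ i, ‖x i‖^2) := EuclideanSpace.norm_eq x
    rw [hn, Real.sq_sqrt (by positivity)]
    exact Finset.sum_congr rfl fun i _ => by rw [Real.norm_eq_abs, sq_abs]
  have hxd : ∑ i : Fin m, (x i) • EuclideanSpace.single i (1:ℝ) = x := by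
    have hb := (EuclideanSpace.basisFun (Fin m) ℝ).sum_repr x
    simpa [EuclideanSpace.basisFun_apply, EuclideanSpace.basisFun_repr] using hb
  have hSQ : ∑ i : Fin m, x i * fderiv ℝ Q x (EuclideanSpace.single i 1) = (k:ℝ) * Q x := by
    have h1 : (fderiv ℝ Q x) (∑ i : Fin m, x i • EuclideanSpace.single i (1:ℝ))
        = (k:ℝ) * Q x := by rw [hxd]; exact hQE
    rw [← h1, map_sum]
    exact Finset.sum_congr rfl fun i _ => by rw [map_smul]; rfl
  rw [hdir0, Finset.sum_congr rfl fun i _ => hdiri i]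
  rw [Finset.sum_add_distrib, Finset.sum_add_distrib, Finset.sum_add_distrib,
    ← Finset.mul_sum, ← Finset.mul_sum, ← Finset.mul_sum, hS2, hSQ, hQharm,
    Finset.sum_const, Finset.card_univ, Fintype.card_fin, nsmul_eq_mul]
  have hDD11 : dirDeriv2 g ((1:ℝ),(0:ℝ)) (x₀,‖x‖)
      = - dirDeriv2 g ((0:ℝ),(1:ℝ)) (x₀,‖x‖)
        - 2*j/‖x‖ * fderiv ℝ g (x₀,‖x‖) ((0:ℝ),(1:ℝ)) := by
    linarith [hpde]
  rw [hDD11]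
  field_simp
  ring

end CoreSum

section PDRules
variable {F : Type*} [NormedAddCommGroup F] [NormedSpace ℝ F]

theorem hasDerivAt_line0 (f : F → ℝ) (q v : F) (hf : DifferentiableAt ℝ f q) :
    HasDerivAt (fun t : ℝ => f (q + t • v)) (fderiv ℝ f q v) 0 := by
  have := hasDerivAt_line f q v 0 (by simpa using hf)
  simpa using this

theorem pd_congr {f g : F → ℝ} {U : Set F} (hU : IsOpen U) (h : Set.EqOn f g U)
    {q : F} (hq : q ∈ U) (v : F) : fderiv ℝ f q v = fderiv ℝ g q v := by
  rw [Filter.EventuallyEq.fderiv_eq (h.eventuallyEq_of_mem (hU.mem_nhds hq))]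

theorem pd_clm (w : F →L[ℝ] ℝ) (q v : F) : fderiv ℝ (fun q' => w q') q v = w v := by
  rw [show (fun q' => w q') = ⇑w from rfl, w.fderiv]

theorem pd_add (f g : F → ℝ) (q v : F) (hf : DifferentiableAt ℝ f q)
    (hg : DifferentiableAt ℝ g q) :
    fderiv ℝ (fun q' => f q' + g q') q v = fderiv ℝ f q v + fderiv ℝ g q v := by
  rw [fderiv_fun_add hf hg, ContinuousLinearMap.add_apply]

theorem pd_sub (f g : F → ℝ) (q v : F) (hf : DifferentiableAt ℝ f q)
    (hg : DifferentiableAt ℝ g q) :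
    fderiv ℝ (fun q' => f q' - g q') q v = fderiv ℝ f q v - fderiv ℝ g q v := by
  rw [fderiv_fun_sub hf hg, ContinuousLinearMap.sub_apply]

theorem pd_mul (f g : F → ℝ) (q v : F) (hf : DifferentiableAt ℝ f q)
    (hg : DifferentiableAt ℝ g q) :
    fderiv ℝ (fun q' => f q' * g q') q v
      = fderiv ℝ f q v * g q + f q * fderiv ℝ g q v := by
  have h := (hasDerivAt_line0 f q v hf).mul (hasDerivAt_line0 g q v hg)
  simp only [zero_smul, add_zero] at h
  have h2 := hasDerivAt_line0 (fun q' => f q' * g q') q v (hf.mul hg)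
  exact h2.unique h

theorem diffAt_div {f d : F → ℝ} {q : F} (hf : DifferentiableAt ℝ f q)
    (hd : DifferentiableAt ℝ d q) (h0 : d q ≠ 0) :
    DifferentiableAt ℝ (fun q' => f q' / d q') q := by
  have heq : (fun q' => f q' / d q') = fun q' => f q' * (d q')⁻¹ := by
    funext z; rw [div_eq_mul_inv]
  rw [heq]
  exact hf.mul (hd.inv h0)

theorem pd_div (f d : F → ℝ) (q v : F) (hf : DifferentiableAt ℝ f q)
    (hd : DifferentiableAt ℝ d q) (h0 : d q ≠ 0) :
    fderiv ℝ (fun q' => f q' / d q') q v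
      = (fderiv ℝ f q v * d q - f q * fderiv ℝ d q v) / (d q)^2 := by
  have h := (hasDerivAt_line0 f q v hf).div (hasDerivAt_line0 d q v hd)
    (by simpa using h0)
  simp only [zero_smul, add_zero] at h
  have h2 := hasDerivAt_line0 (fun q' => f q' / d q') q v (diffAt_div hf hd h0)
  exact h2.unique h

theorem pd_const_mul (f : F → ℝ) (c : ℝ) (q v : F) (hf : DifferentiableAt ℝ f q) :
    fderiv ℝ (fun q' => c * f q') q v = c * fderiv ℝ f q v := by
  have h := (hasDerivAt_line0 f q v hf).const_mul c
  have h2 := hasDerivAt_line0 (fun q' => c * f q') q v (hf.const_mul c)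
  exact h2.unique h

end PDRules

section PDEStep
variable {F : Type*} [NormedAddCommGroup F] [NormedSpace ℝ F]

theorem pde_step (U : Set F) (hU : IsOpen U) (g : F → ℝ) (hg : ContDiffOn ℝ ∞ g U)
    (va vb : F) (w : F →L[ℝ] ℝ) (hwa : w va = 0) (hwb : w vb = 1)
    (hw : ∀ q ∈ U, w q ≠ 0) (j : ℝ)
    (hpde : ∀ q ∈ U, dirDeriv2 g va q + dirDeriv2 g vb q
      + 2*j/(w q) * fderiv ℝ g q vb = 0)
    {q : F} (hq : q ∈ U) :
    dirDeriv2 (fun q' => fderiv ℝ g q' vb / w q') va q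
      + dirDeriv2 (fun q' => fderiv ℝ g q' vb / w q') vb q
      + 2*(j+1)/(w q) * fderiv ℝ (fun q' => fderiv ℝ g q' vb / w q') q vb = 0 := by
  set u : F → ℝ := fun q' => fderiv ℝ g q' vb with hudef
  have hus : ContDiffOn ℝ ∞ u U := contDiffOn_pd g U hU hg vb
  have hWne : w q ≠ 0 := hw q hq
  have hwd : ∀ q' : F, DifferentiableAt ℝ (fun z => w z) q' := fun q' => w.differentiableAt
  have hpdDg : ∀ q' ∈ U, ∀ v : F, fderiv ℝ (fun z => u z / w z) q' v
      = (fderiv ℝ u q' v * w q' - u q' * w v) / (w q')^2 := by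
    intro q' hq' v
    rw [pd_div u (fun z => w z) q' v (diffAt_of_smooth hU hus hq') (hwd q') (hw q' hq'), pd_clm w _ _]
  -- dirDeriv2 in direction va
  have hDa : dirDeriv2 (fun z => u z / w z) va q
      = fderiv ℝ (fun z => fderiv ℝ u z va) q va / w q := by
    have h1 : Set.EqOn (fun z => fderiv ℝ (fun z' => u z' / w z') z va)
        (fun z => fderiv ℝ u z va / w z) U := by
      intro z hz
      dsimp only
      rw [hpdDg z hz va, hwa, mul_zero, sub_zero, pow_two,
        mul_div_mul_right _ _ (hw z hz)]
    show fderiv ℝ (fun z => fderiv ℝ (fun z' => u z' / w z') z va) q va = _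
    rw [pd_congr hU h1 hq va,
      pd_div (fun z => fderiv ℝ u z va) (fun z => w z) q va
        (diffAt_of_smooth hU (contDiffOn_pd u U hU hus va) hq) (hwd q) hWne, pd_clm w _ _, hwa,
      mul_zero, sub_zero, pow_two, mul_div_mul_right _ _ hWne]
  -- dirDeriv2 in direction vb
  have h2 : Set.EqOn (fun z => fderiv ℝ (fun z' => u z' / w z') z vb)
      (fun z => (fderiv ℝ u z vb * w z - u z) / (w z)^2) U := by
    intro z hz
    dsimp only
    rw [hpdDg z hz vb, hwb, mul_one]
  have hNdiff : DifferentiableAt ℝ (fun z => fderiv ℝ u z vb * w z - u z) q :=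
    ((diffAt_of_smooth hU (contDiffOn_pd u U hU hus vb) hq).mul (hwd q)).sub
      (diffAt_of_smooth hU hus hq)
  have hddiff : DifferentiableAt ℝ (fun z => (w z)^2) q := (hwd q).pow 2
  have hN : fderiv ℝ (fun z => fderiv ℝ u z vb * w z - u z) q vb
      = fderiv ℝ (fun z => fderiv ℝ u z vb) q vb * w q + fderiv ℝ u q vb * 1
        - fderiv ℝ u q vb := by
    rw [pd_sub (fun z => fderiv ℝ u z vb * w z) u q vb ((diffAt_of_smooth hU (contDiffOn_pd u U hU hus vb) hq).mul (hwd q))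
        (diffAt_of_smooth hU hus hq),
      pd_mul _ _ q vb (diffAt_of_smooth hU (contDiffOn_pd u U hU hus vb) hq) (hwd q),
      pd_clm w _ _, hwb]
  have hd2 : fderiv ℝ (fun z => (w z)^2) q vb = 1 * w q + w q * 1 := by
    have hsq : (fun z => (w z)^2) = fun z => w z * w z := by funext z; ring
    rw [hsq, pd_mul _ _ q vb (hwd q) (hwd q), pd_clm w _ _, hwb]
  have hDb : dirDeriv2 (fun z => u z / w z) vb q
      = ((fderiv ℝ (fun z => fderiv ℝ u z vb) q vb * w q + fderiv ℝ u q vb * 1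
            - fderiv ℝ u q vb) * (w q)^2
          - (fderiv ℝ u q vb * w q - u q) * (1 * w q + w q * 1)) / ((w q)^2)^2 := by
    show fderiv ℝ (fun z => fderiv ℝ (fun z' => u z' / w z') z vb) q vb = _
    rw [pd_congr hU h2 hq vb,
      pd_div (fun z => fderiv ℝ u z vb * w z - u z) (fun z => (w z)^2) q vb hNdiff hddiff
        (pow_ne_zero 2 hWne), hN, hd2]
  -- differentiate the PDE identity in direction vb
  have hdds : ∀ v1 v2 : F, ContDiffOn ℝ ∞ (fun z => fderiv ℝ (fun z' => fderiv ℝ g z' v1) z v2) U :=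
    fun v1 v2 => contDiffOn_pd _ U hU (contDiffOn_pd g U hU hg v1) v2
  have hDDdiff : ∀ v : F, DifferentiableAt ℝ (fun z => dirDeriv2 g v z) q := fun v =>
    diffAt_of_smooth hU
      (show ContDiffOn ℝ ∞ (fun z => dirDeriv2 g v z) U from
        contDiffOn_pd _ U hU (contDiffOn_pd g U hU hg v) v) hq
  have hT3diff : DifferentiableAt ℝ (fun z => 2*j/(w z) * fderiv ℝ g z vb) q :=
    (diffAt_div (differentiableAt_const (2*j)) (hwd q) hWne).mul
      (diffAt_of_smooth hU (contDiffOn_pd g U hU hg vb) hq)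
  have hZ : fderiv ℝ (fun z => dirDeriv2 g va z + dirDeriv2 g vb z
      + 2*j/(w z) * fderiv ℝ g z vb) q vb = 0 := by
    have hzero : Set.EqOn (fun z => dirDeriv2 g va z + dirDeriv2 g vb z
        + 2*j/(w z) * fderiv ℝ g z vb) (fun _ => (0:ℝ)) U := fun z hz => hpde z hz
    rw [pd_congr hU hzero hq vb]
    simp [fderiv_const]
  have hexp : fderiv ℝ (fun z => dirDeriv2 g va z + dirDeriv2 g vb z
      + 2*j/(w z) * fderiv ℝ g z vb) q vb
      = fderiv ℝ (fun z => dirDeriv2 g va z) q vb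
        + fderiv ℝ (fun z => dirDeriv2 g vb z) q vb
        + ((fderiv ℝ (fun _ : F => 2*j) q vb * w q - 2*j * w vb) / (w q)^2
            * fderiv ℝ g q vb + 2*j/(w q) * fderiv ℝ u q vb) := by
    rw [pd_add (fun z => dirDeriv2 g va z + dirDeriv2 g vb z) (fun z => 2*j/(w z) * fderiv ℝ g z vb) q vb ((hDDdiff va).add (hDDdiff vb)) hT3diff,
      pd_add _ _ q vb (hDDdiff va) (hDDdiff vb),
      pd_mul _ _ q vb (diffAt_div (differentiableAt_const (2*j)) (hwd q) hWne)
        (diffAt_of_smooth hU (contDiffOn_pd g U hU hg vb) hq),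
      pd_div (fun _ => 2*j) (fun z => w z) q vb (differentiableAt_const (2*j)) (hwd q) hWne,
      pd_clm w _ _]
  -- commutation for the first third-order term
  have hT1 : fderiv ℝ (fun z => dirDeriv2 g va z) q vb
      = fderiv ℝ (fun z => fderiv ℝ u z va) q va := by
    have e1 : fderiv ℝ (fun z => fderiv ℝ (fun z' => fderiv ℝ g z' va) z va) q vb
        = fderiv ℝ (fun z => fderiv ℝ (fun z' => fderiv ℝ g z' va) z vb) q va :=
      pd_comm (fun z' => fderiv ℝ g z' va) U hU (contDiffOn_pd g U hU hg va) q hq va vb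
    have e2 : Set.EqOn (fun z => fderiv ℝ (fun z' => fderiv ℝ g z' va) z vb)
        (fun z => fderiv ℝ u z va) U := fun z hz => pd_comm g U hU hg z hz va vb
    show fderiv ℝ (fun z => fderiv ℝ (fun z' => fderiv ℝ g z' va) z va) q vb = _
    rw [e1, pd_congr hU e2 hq va]
  have hfconst : fderiv ℝ (fun _ : F => 2*j) q vb = 0 := by
    simp [fderiv_const]
  rw [hexp, hT1, hfconst, hwb] at hZ
  have hT2 : fderiv ℝ (fun z => dirDeriv2 g vb z) q vb
      = fderiv ℝ (fun z => fderiv ℝ u z vb) q vb := rfl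
  have hfold : fderiv ℝ g q vb = u q := rfl
  rw [hT2, hfold] at hZ
  -- final algebra
  rw [hDa, hDb, hpdDg q hq vb, hwb]
  have haa : fderiv ℝ (fun z => fderiv ℝ u z va) q va
      = - fderiv ℝ (fun z => fderiv ℝ u z vb) q vb
        - ((0 * w q - 2*j*1) / (w q)^2 * u q + 2*j/(w q) * fderiv ℝ u q vb) := by
    linarith [hZ]
  rw [haa]
  field_simp
  ring

theorem pde_preserve (U : Set F) (hU : IsOpen U) (g : F → ℝ) (hg : ContDiffOn ℝ ∞ g U)
    (va vb vc : F) (w : F →L[ℝ] ℝ) (hwa : w va = 0) (hwb : w vb = 0)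
    (hw : ∀ q ∈ U, w q ≠ 0)
    (hpde : ∀ q ∈ U, dirDeriv2 g va q + dirDeriv2 g vb q = 0)
    {q : F} (hq : q ∈ U) :
    dirDeriv2 (fun q' => fderiv ℝ g q' vc / w q') va q
      + dirDeriv2 (fun q' => fderiv ℝ g q' vc / w q') vb q = 0 := by
  set u : F → ℝ := fun q' => fderiv ℝ g q' vc with hudef
  have hus : ContDiffOn ℝ ∞ u U := contDiffOn_pd g U hU hg vc
  have hWne : w q ≠ 0 := hw q hq
  have hwd : ∀ q' : F, DifferentiableAt ℝ (fun z => w z) q' := fun q' => w.differentiableAt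
  have hpdDg : ∀ v : F, w v = 0 → ∀ q' ∈ U, fderiv ℝ (fun z => u z / w z) q' v
      = fderiv ℝ u q' v / w q' := by
    intro v hv q' hq'
    rw [pd_div u (fun z => w z) q' v (diffAt_of_smooth hU hus hq') (hwd q') (hw q' hq'),
      pd_clm w _ _, hv, mul_zero, sub_zero, pow_two, mul_div_mul_right _ _ (hw q' hq')]
  have hDD : ∀ v : F, w v = 0 → dirDeriv2 (fun z => u z / w z) v q
      = fderiv ℝ (fun z => fderiv ℝ u z v) q v / w q := by
    intro v hv
    have h1 : Set.EqOn (fun z => fderiv ℝ (fun z' => u z' / w z') z v)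
        (fun z => fderiv ℝ u z v / w z) U := fun z hz => hpdDg v hv z hz
    show fderiv ℝ (fun z => fderiv ℝ (fun z' => u z' / w z') z v) q v = _
    rw [pd_congr hU h1 hq v,
      pd_div (fun z => fderiv ℝ u z v) (fun z => w z) q v
        (diffAt_of_smooth hU (contDiffOn_pd u U hU hus v) hq) (hwd q) hWne, pd_clm w _ _, hv,
      mul_zero, sub_zero, pow_two, mul_div_mul_right _ _ hWne]
  -- third order commutation: fderiv (fun z => fderiv u z v) q v = pd_vc (dirDeriv2 g v) q
  have hcomm : ∀ v : F, fderiv ℝ (fun z => fderiv ℝ u z v) q v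
      = fderiv ℝ (fun z => dirDeriv2 g v z) q vc := by
    intro v
    have e2 : Set.EqOn (fun z => fderiv ℝ u z v)
        (fun z => fderiv ℝ (fun z' => fderiv ℝ g z' v) z vc) U :=
      fun z hz => pd_comm g U hU hg z hz vc v
    have e1 : fderiv ℝ (fun z => fderiv ℝ (fun z' => fderiv ℝ g z' v) z vc) q v
        = fderiv ℝ (fun z => fderiv ℝ (fun z' => fderiv ℝ g z' v) z v) q vc :=
      pd_comm (fun z' => fderiv ℝ g z' v) U hU (contDiffOn_pd g U hU hg v) q hq vc v
    rw [pd_congr hU e2 hq v, e1]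
    rfl
  have hdds : ∀ v1 v2 : F, ContDiffOn ℝ ∞
      (fun z => fderiv ℝ (fun z' => fderiv ℝ g z' v1) z v2) U :=
    fun v1 v2 => contDiffOn_pd _ U hU (contDiffOn_pd g U hU hg v1) v2
  have hZ : fderiv ℝ (fun z => dirDeriv2 g va z + dirDeriv2 g vb z) q vc = 0 := by
    have hzero : Set.EqOn (fun z => dirDeriv2 g va z + dirDeriv2 g vb z)
        (fun _ => (0:ℝ)) U := fun z hz => hpde z hz
    rw [pd_congr hU hzero hq vc]
    simp [fderiv_const]
  have hDDdiff : ∀ v : F, DifferentiableAt ℝ (fun z => dirDeriv2 g v z) q := fun v =>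
    diffAt_of_smooth hU
      (show ContDiffOn ℝ ∞ (fun z => dirDeriv2 g v z) U from
        contDiffOn_pd _ U hU (contDiffOn_pd g U hU hg v) v) hq
  rw [pd_add _ _ q vc (hDDdiff va) (hDDdiff vb)] at hZ
  rw [hDD va hwa, hDD vb hwb, hcomm va, hcomm vb, ← add_div, hZ, zero_div]

end PDEStep

section Affine
variable {G : Type*} [NormedAddCommGroup G] [NormedSpace ℝ G]
variable {F : Type*} [NormedAddCommGroup F] [NormedSpace ℝ F]

theorem pd_affine (L : G →L[ℝ] F) (c : F) (f : F → ℝ) (p : G) (v : G)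
    (hf : DifferentiableAt ℝ f (L p + c)) :
    fderiv ℝ (fun z => f (L z + c)) p v = fderiv ℝ f (L p + c) (L v) := by
  have h1 := hasDerivAt_line0 f (L p + c) (L v) hf
  have heq : (fun t : ℝ => f ((L p + c) + t • (L v))) = fun t => f (L (p + t • v) + c) := by
    funext t
    congr 1
    rw [map_add, map_smul]
    abel
  have hin : DifferentiableAt ℝ (fun z : G => L z + c) p :=
    (L.differentiable.differentiableAt).add_const c
  have h2 : DifferentiableAt ℝ (fun z => f (L z + c)) p := hf.comp p hin
  have h3 := hasDerivAt_line0 (fun z => f (L z + c)) p v h2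
  rw [heq] at h1
  exact h3.unique h1

theorem dirDeriv2_affine (L : G →L[ℝ] F) (c : F) (f : F → ℝ) {U : Set F} (hU : IsOpen U)
    (hf : ContDiffOn ℝ ∞ f U) (p : G) (v : G) (hp : L p + c ∈ U) :
    dirDeriv2 (fun z => f (L z + c)) v p = dirDeriv2 f (L v) (L p + c) := by
  have hW : IsOpen ((fun z : G => L z + c) ⁻¹' U) := by
    apply hU.preimage
    exact (L.continuous).add continuous_const
  have h1 : Set.EqOn (fun z => fderiv ℝ (fun z' => f (L z' + c)) z v)
      (fun z => (fun q => fderiv ℝ f q (L v)) (L z + c)) ((fun z : G => L z + c) ⁻¹' U) := by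
    intro z hz
    exact pd_affine L c f z v (diffAt_of_smooth hU hf hz)
  show fderiv ℝ (fun z => fderiv ℝ (fun z' => f (L z' + c)) z v) p v = _
  rw [pd_congr hW h1 hp v,
    pd_affine L c (fun q => fderiv ℝ f q (L v)) p v
      (diffAt_of_smooth hU (contDiffOn_pd f U hU hf (L v)) hp)]
  rfl

theorem deriv_slice (L : ℝ →L[ℝ] F) (c : F) (f : F → ℝ) (a : ℝ)
    (hf : DifferentiableAt ℝ f (L a + c)) :
    deriv (fun s : ℝ => f (L s + c)) a = fderiv ℝ f (L a + c) (L 1) := by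
  have := pd_affine L c f a 1 hf
  rw [← this]
  rfl

theorem deriv2_slice (L : ℝ →L[ℝ] F) (c : F) (f : F → ℝ) {U : Set F} (hU : IsOpen U)
    (hf : ContDiffOn ℝ ∞ f U) (a : ℝ) (hp : L a + c ∈ U) :
    iteratedDeriv 2 (fun s : ℝ => f (L s + c)) a = dirDeriv2 f (L 1) (L a + c) := by
  have h2 : iteratedDeriv 2 (fun s : ℝ => f (L s + c)) a
      = deriv (deriv (fun s : ℝ => f (L s + c))) a := by
    rw [show (2:ℕ) = 1 + 1 from rfl, iteratedDeriv_succ, iteratedDeriv_one]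
  rw [h2,
    show deriv (deriv (fun s : ℝ => f (L s + c))) a
      = dirDeriv2 (fun s : ℝ => f (L s + c)) 1 a from rfl,
    dirDeriv2_affine L c f hU hf a 1 hp]

theorem dirDeriv2_congr {f g : F → ℝ} {U : Set F} (hU : IsOpen U) (h : Set.EqOn f g U)
    {p : F} (hp : p ∈ U) (v : F) : dirDeriv2 f v p = dirDeriv2 g v p := by
  have h1 : Set.EqOn (fun q => fderiv ℝ f q v) (fun q => fderiv ℝ g q v) U :=
    fun q hq => pd_congr hU h hq v
  show fderiv ℝ (fun q => fderiv ℝ f q v) p v = _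
  rw [pd_congr hU h1 hp v]
  rfl

theorem dirDeriv2_const_mul (f : F → ℝ) {U : Set F} (hU : IsOpen U)
    (hf : ContDiffOn ℝ ∞ f U) {p : F} (hp : p ∈ U) (c : ℝ) (v : F) :
    dirDeriv2 (fun q => c * f q) v p = c * dirDeriv2 f v p := by
  have h1 : Set.EqOn (fun q => fderiv ℝ (fun q' => c * f q') q v)
      (fun q => c * fderiv ℝ f q v) U :=
    fun q hq => pd_const_mul f c q v (diffAt_of_smooth hU hf hq)
  show fderiv ℝ (fun q => fderiv ℝ (fun q' => c * f q') q v) p v = _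
  rw [pd_congr hU h1 hp v,
    pd_const_mul _ c p v (diffAt_of_smooth hU (contDiffOn_pd f U hU hf v) hp)]
  rfl

end Affine

section Transfer
variable {F1 : Type*} [NormedAddCommGroup F1] [NormedSpace ℝ F1]
variable {F2 : Type*} [NormedAddCommGroup F2] [NormedSpace ℝ F2]

theorem evdiff_of_smooth {f : F1 → ℝ} {U : Set F1} (hU : IsOpen U)
    (hf : ContDiffOn ℝ ∞ f U) {p : F1} (hp : p ∈ U) :
    ∀ᶠ q in nhds p, DifferentiableAt ℝ f q := by
  filter_upwards [hU.mem_nhds hp] with q hq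
  exact diffAt_of_smooth hU hf hq

theorem dirDeriv2_of_line_eq (f1 : F1 → ℝ) (f2 : F2 → ℝ) {U1 : Set F1} {U2 : Set F2}
    (hU1 : IsOpen U1) (hU2 : IsOpen U2)
    (hf1 : ContDiffOn ℝ ∞ f1 U1) (hf2 : ContDiffOn ℝ ∞ f2 U2)
    {p1 : F1} (hp1 : p1 ∈ U1) {p2 : F2} (hp2 : p2 ∈ U2) (v1 : F1) (v2 : F2)
    (hline : ∀ t : ℝ, f1 (p1 + t • v1) = f2 (p2 + t • v2)) :
    dirDeriv2 f1 v1 p1 = dirDeriv2 f2 v2 p2 := by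
  rw [dirDeriv2_eq_deriv2_line f1 v1 p1 (evdiff_of_smooth hU1 hf1 hp1)
      (diffAt_of_smooth hU1 (contDiffOn_pd f1 U1 hU1 hf1 v1) hp1),
    dirDeriv2_eq_deriv2_line f2 v2 p2 (evdiff_of_smooth hU2 hf2 hp2)
      (diffAt_of_smooth hU2 (contDiffOn_pd f2 U2 hU2 hf2 v2) hp2)]
  rw [show (fun t : ℝ => f1 (p1 + t • v1)) = fun t : ℝ => f2 (p2 + t • v2) from funext hline]

end Transfer

section XSpace

def U4 : Set (ℝ × ℝ × ℝ × ℝ) := Set.univ ×ˢ Set.Ioi (0:ℝ) ×ˢ Set.univ ×ˢ Set.Ioi (0:ℝ)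

theorem hU4 : IsOpen U4 :=
  isOpen_univ.prod (isOpen_Ioi.prod (isOpen_univ.prod isOpen_Ioi))

noncomputable def D2op (T : ℝ × ℝ × ℝ × ℝ → ℝ) : ℝ × ℝ × ℝ × ℝ → ℝ :=
  fun q => fderiv ℝ T q (0,1,0,0) / q.2.1

noncomputable def D4op (T : ℝ × ℝ × ℝ × ℝ → ℝ) : ℝ × ℝ × ℝ × ℝ → ℝ :=
  fun q => fderiv ℝ T q (0,0,0,1) / q.2.2.2

noncomputable def W2 : (ℝ × ℝ × ℝ × ℝ) →L[ℝ] ℝ :=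
  (ContinuousLinearMap.fst ℝ ℝ (ℝ × ℝ)).comp (ContinuousLinearMap.snd ℝ ℝ (ℝ × ℝ × ℝ))

noncomputable def W4 : (ℝ × ℝ × ℝ × ℝ) →L[ℝ] ℝ :=
  (ContinuousLinearMap.snd ℝ ℝ ℝ).comp
    ((ContinuousLinearMap.snd ℝ ℝ (ℝ × ℝ)).comp (ContinuousLinearMap.snd ℝ ℝ (ℝ × ℝ × ℝ)))

theorem W2_apply (q : ℝ × ℝ × ℝ × ℝ) : W2 q = q.2.1 := rfl
theorem W4_apply (q : ℝ × ℝ × ℝ × ℝ) : W4 q = q.2.2.2 := rfl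

theorem mem_U4 {q : ℝ × ℝ × ℝ × ℝ} : q ∈ U4 ↔ 0 < q.2.1 ∧ 0 < q.2.2.2 := by
  constructor
  · rintro ⟨_, h2, _, h4⟩; exact ⟨h2, h4⟩
  · rintro ⟨h2, h4⟩; exact ⟨Set.mem_univ _, h2, Set.mem_univ _, h4⟩

theorem D2op_smooth {T : ℝ × ℝ × ℝ × ℝ → ℝ} (hT : ContDiffOn ℝ ∞ T U4) :
    ContDiffOn ℝ ∞ (D2op T) U4 := by
  have h1 := contDiffOn_pd T U4 hU4 hT (0,1,0,0)
  have h2 : ContDiffOn ℝ ∞ (fun q : ℝ × ℝ × ℝ × ℝ => q.2.1) U4 :=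
    (W2.contDiff).contDiffOn
  exact h1.div h2 (fun q hq => ne_of_gt (mem_U4.mp hq).1)

theorem D4op_smooth {T : ℝ × ℝ × ℝ × ℝ → ℝ} (hT : ContDiffOn ℝ ∞ T U4) :
    ContDiffOn ℝ ∞ (D4op T) U4 := by
  have h1 := contDiffOn_pd T U4 hU4 hT (0,0,0,1)
  have h2 : ContDiffOn ℝ ∞ (fun q : ℝ × ℝ × ℝ × ℝ => q.2.2.2) U4 :=
    (W4.contDiff).contDiffOn
  exact h1.div h2 (fun q hq => ne_of_gt (mem_U4.mp hq).2)

theorem D2op_iter_smooth {T : ℝ × ℝ × ℝ × ℝ → ℝ} (hT : ContDiffOn ℝ ∞ T U4) (n : ℕ) :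
    ContDiffOn ℝ ∞ (D2op^[n] T) U4 := by
  induction n with
  | zero => exact hT
  | succ n ih => rw [Function.iterate_succ_apply']; exact D2op_smooth ih

theorem D4op_iter_smooth {T : ℝ × ℝ × ℝ × ℝ → ℝ} (hT : ContDiffOn ℝ ∞ T U4) (n : ℕ) :
    ContDiffOn ℝ ∞ (D4op^[n] T) U4 := by
  induction n with
  | zero => exact hT
  | succ n ih => rw [Function.iterate_succ_apply']; exact D4op_smooth ih

end XSpace

section PDEFamilies

theorem pde_x_iter {h : ℝ × ℝ × ℝ × ℝ → ℝ} (hh : ContDiffOn ℝ ∞ h U4)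
    (hbase : ∀ q ∈ U4, dirDeriv2 h (1,0,0,0) q + dirDeriv2 h (0,1,0,0) q = 0) :
    ∀ n : ℕ, ∀ q ∈ U4, dirDeriv2 (D4op^[n] h) (1,0,0,0) q
      + dirDeriv2 (D4op^[n] h) (0,1,0,0) q = 0 := by
  intro n
  induction n with
  | zero => exact hbase
  | succ n ih =>
    intro q hq
    rw [Function.iterate_succ_apply']
    exact pde_preserve U4 hU4 (D4op^[n] h) (D4op_iter_smooth hh n)
      (1,0,0,0) (0,1,0,0) (0,0,0,1) W4 rfl rfl
      (fun q' hq' => ne_of_gt (mem_U4.mp hq').2) ih hq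

theorem pde_y_iter {h : ℝ × ℝ × ℝ × ℝ → ℝ} (hh : ContDiffOn ℝ ∞ h U4)
    (hbase : ∀ q ∈ U4, dirDeriv2 h (0,0,1,0) q + dirDeriv2 h (0,0,0,1) q = 0) :
    ∀ n : ℕ, ∀ q ∈ U4, dirDeriv2 (D4op^[n] h) (0,0,1,0) q
      + dirDeriv2 (D4op^[n] h) (0,0,0,1) q
      + 2*(n:ℝ)/(q.2.2.2) * fderiv ℝ (D4op^[n] h) q (0,0,0,1) = 0 := by
  intro n
  induction n with
  | zero =>
    intro q hq
    have := hbase q hq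
    simpa using this
  | succ n ih =>
    intro q hq
    rw [Function.iterate_succ_apply']
    have := pde_step U4 hU4 (D4op^[n] h) (D4op_iter_smooth hh n)
      (0,0,1,0) (0,0,0,1) W4 rfl rfl
      (fun q' hq' => ne_of_gt (mem_U4.mp hq').2) (n:ℝ) ih hq
    push_cast
    exact this

theorem pde_x_iter2 {T : ℝ × ℝ × ℝ × ℝ → ℝ} (hT : ContDiffOn ℝ ∞ T U4)
    (hbase : ∀ q ∈ U4, dirDeriv2 T (1,0,0,0) q + dirDeriv2 T (0,1,0,0) q = 0) :
    ∀ n : ℕ, ∀ q ∈ U4, dirDeriv2 (D2op^[n] T) (1,0,0,0) q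
      + dirDeriv2 (D2op^[n] T) (0,1,0,0) q
      + 2*(n:ℝ)/(q.2.1) * fderiv ℝ (D2op^[n] T) q (0,1,0,0) = 0 := by
  intro n
  induction n with
  | zero =>
    intro q hq
    have := hbase q hq
    simpa using this
  | succ n ih =>
    intro q hq
    rw [Function.iterate_succ_apply']
    have := pde_step U4 hU4 (D2op^[n] T) (D2op_iter_smooth hT n)
      (1,0,0,0) (0,1,0,0) W2 rfl rfl
      (fun q' hq' => ne_of_gt (mem_U4.mp hq').1) (n:ℝ) ih hq
    push_cast
    exact this

end PDEFamilies

section VSpace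
variable {m : ℕ}

def V4 (m : ℕ) : Set (ℝ × EuclideanSpace ℝ (Fin m) × ℝ × EuclideanSpace ℝ (Fin m)) :=
  {p | p.2.1 ≠ 0 ∧ p.2.2.2 ≠ 0}

theorem hV4 (m : ℕ) : IsOpen (V4 m) := by
  have h1 : IsOpen {p : ℝ × EuclideanSpace ℝ (Fin m) × ℝ × EuclideanSpace ℝ (Fin m) |
      p.2.1 ≠ 0} := by
    have : Continuous fun p : ℝ × EuclideanSpace ℝ (Fin m) × ℝ × EuclideanSpace ℝ (Fin m) =>
        p.2.1 := continuous_fst.comp continuous_snd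
    exact isOpen_compl_singleton.preimage this
  have h2 : IsOpen {p : ℝ × EuclideanSpace ℝ (Fin m) × ℝ × EuclideanSpace ℝ (Fin m) |
      p.2.2.2 ≠ 0} := by
    have : Continuous fun p : ℝ × EuclideanSpace ℝ (Fin m) × ℝ × EuclideanSpace ℝ (Fin m) =>
        p.2.2.2 := continuous_snd.comp (continuous_snd.comp continuous_snd)
    exact isOpen_compl_singleton.preimage this
  exact h1.inter h2

theorem NN_mem_U4 {p : ℝ × EuclideanSpace ℝ (Fin m) × ℝ × EuclideanSpace ℝ (Fin m)}
    (hp : p ∈ V4 m) : (p.1, ‖p.2.1‖, p.2.2.1, ‖p.2.2.2‖) ∈ U4 :=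
  mem_U4.mpr ⟨norm_pos_iff.mpr hp.1, norm_pos_iff.mpr hp.2⟩

theorem F_smooth (T : ℝ × ℝ × ℝ × ℝ → ℝ) (hT : ContDiffOn ℝ ∞ T U4)
    (P : EuclideanSpace ℝ (Fin m) × EuclideanSpace ℝ (Fin m) → ℝ) (hP : ContDiff ℝ ∞ P) :
    ContDiffOn ℝ ∞ (fun p : ℝ × EuclideanSpace ℝ (Fin m) × ℝ × EuclideanSpace ℝ (Fin m) =>
      T (p.1, ‖p.2.1‖, p.2.2.1, ‖p.2.2.2‖) * P (p.2.1, p.2.2.2)) (V4 m) := by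
  intro p hp
  apply ContDiffAt.contDiffWithinAt
  have c21 : ContDiffAt ℝ ∞ (fun p : ℝ × EuclideanSpace ℝ (Fin m) × ℝ ×
      EuclideanSpace ℝ (Fin m) => p.2.1) p := contDiffAt_fst.comp p contDiffAt_snd
  have c221 : ContDiffAt ℝ ∞ (fun p : ℝ × EuclideanSpace ℝ (Fin m) × ℝ ×
      EuclideanSpace ℝ (Fin m) => p.2.2.1) p :=
    contDiffAt_fst.comp p (contDiffAt_snd.comp p contDiffAt_snd)
  have c222 : ContDiffAt ℝ ∞ (fun p : ℝ × EuclideanSpace ℝ (Fin m) × ℝ ×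
      EuclideanSpace ℝ (Fin m) => p.2.2.2) p :=
    contDiffAt_snd.comp p (contDiffAt_snd.comp p contDiffAt_snd)
  have hN : ContDiffAt ℝ ∞ (fun p : ℝ × EuclideanSpace ℝ (Fin m) × ℝ ×
      EuclideanSpace ℝ (Fin m) => ((p.1, ‖p.2.1‖, p.2.2.1, ‖p.2.2.2‖) : ℝ × ℝ × ℝ × ℝ)) p :=
    contDiffAt_fst.prodMk (((contDiffAt_norm (𝕜 := ℝ) hp.1).comp p c21).prodMk
      (c221.prodMk ((contDiffAt_norm (𝕜 := ℝ) hp.2).comp p c222)))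
  have hTN : ContDiffAt ℝ ∞ T (p.1, ‖p.2.1‖, p.2.2.1, ‖p.2.2.2‖) :=
    hT.contDiffAt (hU4.mem_nhds (NN_mem_U4 hp))
  have hPπ : ContDiffAt ℝ ∞ (fun p : ℝ × EuclideanSpace ℝ (Fin m) × ℝ ×
      EuclideanSpace ℝ (Fin m) => P (p.2.1, p.2.2.2)) p :=
    hP.contDiffAt.comp p (c21.prodMk c222)
  exact (hTN.comp p hN).mul hPπ

theorem lapX_congr {f g : ℝ × EuclideanSpace ℝ (Fin m) × ℝ × EuclideanSpace ℝ (Fin m) → ℝ}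
    {U : Set (ℝ × EuclideanSpace ℝ (Fin m) × ℝ × EuclideanSpace ℝ (Fin m))}
    (hU : IsOpen U) (h : Set.EqOn f g U) : Set.EqOn (lapX m f) (lapX m g) U := by
  intro p hp
  show dirDeriv2 f (1,0,0,0) p + ∑ i : Fin m, dirDeriv2 f (0, EuclideanSpace.single i 1, 0, 0) p
    = dirDeriv2 g (1,0,0,0) p + ∑ i : Fin m, dirDeriv2 g (0, EuclideanSpace.single i 1, 0, 0) p
  rw [dirDeriv2_congr hU h hp]
  exact congrArg _ (Finset.sum_congr rfl fun i _ => dirDeriv2_congr hU h hp _)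

theorem lapY_congr {f g : ℝ × EuclideanSpace ℝ (Fin m) × ℝ × EuclideanSpace ℝ (Fin m) → ℝ}
    {U : Set (ℝ × EuclideanSpace ℝ (Fin m) × ℝ × EuclideanSpace ℝ (Fin m))}
    (hU : IsOpen U) (h : Set.EqOn f g U) : Set.EqOn (lapY m f) (lapY m g) U := by
  intro p hp
  show dirDeriv2 f (0,0,1,0) p + ∑ i : Fin m, dirDeriv2 f (0, 0, 0, EuclideanSpace.single i 1) p
    = dirDeriv2 g (0,0,1,0) p + ∑ i : Fin m, dirDeriv2 g (0, 0, 0, EuclideanSpace.single i 1) p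
  rw [dirDeriv2_congr hU h hp]
  exact congrArg _ (Finset.sum_congr rfl fun i _ => dirDeriv2_congr hU h hp _)

theorem lapX_const_mul {f : ℝ × EuclideanSpace ℝ (Fin m) × ℝ × EuclideanSpace ℝ (Fin m) → ℝ}
    {U : Set (ℝ × EuclideanSpace ℝ (Fin m) × ℝ × EuclideanSpace ℝ (Fin m))}
    (hU : IsOpen U) (hf : ContDiffOn ℝ ∞ f U) (c : ℝ) {p} (hp : p ∈ U) :
    lapX m (fun q => c * f q) p = c * lapX m f p := by
  show dirDeriv2 (fun q => c * f q) (1,0,0,0) p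
      + ∑ i : Fin m, dirDeriv2 (fun q => c * f q) (0, EuclideanSpace.single i 1, 0, 0) p
    = c * (dirDeriv2 f (1,0,0,0) p
      + ∑ i : Fin m, dirDeriv2 f (0, EuclideanSpace.single i 1, 0, 0) p)
  rw [dirDeriv2_const_mul f hU hf hp, mul_add, Finset.mul_sum]
  exact congrArg _ (Finset.sum_congr rfl fun i _ => dirDeriv2_const_mul f hU hf hp _ _)

end VSpace

section LapStep
variable {m : ℕ}

theorem G_open : IsOpen (Set.univ ×ˢ ({(0:EuclideanSpace ℝ (Fin m))}ᶜ) :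
    Set (ℝ × EuclideanSpace ℝ (Fin m))) :=
  isOpen_univ.prod isOpen_compl_singleton

theorem G_smooth (g : ℝ × ℝ → ℝ) (hg : ContDiffOn ℝ ∞ g (Set.univ ×ˢ Set.Ioi (0:ℝ)))
    (Q : EuclideanSpace ℝ (Fin m) → ℝ) (hQ : ContDiff ℝ ∞ Q) :
    ContDiffOn ℝ ∞ (fun q : ℝ × EuclideanSpace ℝ (Fin m) => g (q.1, ‖q.2‖) * Q q.2)
      (Set.univ ×ˢ ({(0:EuclideanSpace ℝ (Fin m))}ᶜ)) := by
  intro q hq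
  have hq2 : q.2 ≠ 0 := hq.2
  have h1 : ContDiffAt ℝ ∞
      (fun q : ℝ × EuclideanSpace ℝ (Fin m) => ((q.1, ‖q.2‖) : ℝ × ℝ)) q :=
    contDiffAt_fst.prodMk ((contDiffAt_norm (𝕜 := ℝ) hq2).comp q contDiffAt_snd)
  have h2 : ContDiffAt ℝ ∞ g (q.1, ‖q.2‖) :=
    hg.contDiffAt ((isOpen_univ.prod isOpen_Ioi).mem_nhds
      ⟨Set.mem_univ _, by simpa using norm_pos_iff.mpr hq2⟩)
  exact (((h2.comp q h1).mul (hQ.contDiffAt.comp q contDiffAt_snd))).contDiffWithinAt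

noncomputable def L12 : (ℝ × ℝ) →L[ℝ] (ℝ × ℝ × ℝ × ℝ) :=
  (ContinuousLinearMap.fst ℝ ℝ ℝ).prod ((ContinuousLinearMap.snd ℝ ℝ ℝ).prod 0)

noncomputable def L34 : (ℝ × ℝ) →L[ℝ] (ℝ × ℝ × ℝ × ℝ) :=
  (0 : (ℝ × ℝ) →L[ℝ] ℝ).prod ((0 : (ℝ × ℝ) →L[ℝ] ℝ).prod
    ((ContinuousLinearMap.fst ℝ ℝ ℝ).prod (ContinuousLinearMap.snd ℝ ℝ ℝ)))

theorem L12_pt (a b c d : ℝ) : L12 (a, b) + ((0:ℝ), (0:ℝ), c, d) = (a, b, c, d) := by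
  show ((a, b, (0:ℝ), (0:ℝ)) : ℝ × ℝ × ℝ × ℝ) + (0, 0, c, d) = (a, b, c, d)
  simp [Prod.mk_add_mk]

theorem L34_pt (a b c d : ℝ) : L34 (c, d) + (a, b, (0:ℝ), (0:ℝ)) = (a, b, c, d) := by
  show (((0:ℝ), (0:ℝ), c, d) : ℝ × ℝ × ℝ × ℝ) + (a, b, 0, 0) = (a, b, c, d)
  simp [Prod.mk_add_mk]

theorem lap_step_x (k : ℕ)
    (P : EuclideanSpace ℝ (Fin m) × EuclideanSpace ℝ (Fin m) → ℝ) (hP : ContDiff ℝ ∞ P)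
    (hPharmx : ∀ y x : EuclideanSpace ℝ (Fin m), x ≠ 0 →
      ∑ i : Fin m, dirDeriv2 (fun x' => P (x', y)) (EuclideanSpace.single i 1) x = 0)
    (hPE : ∀ x y : EuclideanSpace ℝ (Fin m),
      fderiv ℝ (fun x' => P (x', y)) x x = (k:ℝ) * P (x, y))
    (T : ℝ × ℝ × ℝ × ℝ → ℝ) (hT : ContDiffOn ℝ ∞ T U4) (j : ℝ)
    (hTpde : ∀ q ∈ U4, dirDeriv2 T (1,0,0,0) q + dirDeriv2 T (0,1,0,0) q
      + 2*j/(q.2.1) * fderiv ℝ T q (0,1,0,0) = 0)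
    (x₀ y₀ : ℝ) (x y : EuclideanSpace ℝ (Fin m)) (hx : x ≠ 0) (hy : y ≠ 0) :
    lapX m (fun p' => T (p'.1, ‖p'.2.1‖, p'.2.2.1, ‖p'.2.2.2‖) * P (p'.2.1, p'.2.2.2))
        (x₀, x, y₀, y)
      = (2*(k:ℝ) + m - 1 - 2*j)
        * (D2op T (x₀, ‖x‖, y₀, ‖y‖) * P (x, y)) := by
  have hr : 0 < ‖x‖ := norm_pos_iff.mpr hx
  have hρ : 0 < ‖y‖ := norm_pos_iff.mpr hy
  have hpV : ((x₀, x, y₀, y) : ℝ × EuclideanSpace ℝ (Fin m) × ℝ × EuclideanSpace ℝ (Fin m))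
      ∈ V4 m := ⟨hx, hy⟩
  have hptmem : ∀ a b : ℝ, 0 < b → ((a, b, y₀, ‖y‖) : ℝ × ℝ × ℝ × ℝ) ∈ U4 :=
    fun a b hb => mem_U4.mpr ⟨hb, hρ⟩
  -- the 2-variable slice g
  have hg : ContDiffOn ℝ ∞ (fun ab : ℝ × ℝ => T (L12 ab + ((0:ℝ), (0:ℝ), y₀, ‖y‖)))
      (Set.univ ×ˢ Set.Ioi (0:ℝ)) := by
    apply hT.comp ((L12.contDiff.add contDiff_const).contDiffOn)
    intro ab hab
    show L12 ab + ((0:ℝ), (0:ℝ), y₀, ‖y‖) ∈ U4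
    rw [show (ab : ℝ × ℝ) = (ab.1, ab.2) from rfl, L12_pt]
    exact hptmem ab.1 ab.2 hab.2
  have hQs : ContDiff ℝ ∞ (fun z : EuclideanSpace ℝ (Fin m) => P (z, y)) :=
    hP.comp (contDiff_id.prodMk contDiff_const)
  -- PDE for g
  have hgpde : dirDeriv2 (fun ab : ℝ × ℝ => T (L12 ab + ((0:ℝ), (0:ℝ), y₀, ‖y‖)))
        ((1:ℝ),(0:ℝ)) (x₀,‖x‖)
      + dirDeriv2 (fun ab : ℝ × ℝ => T (L12 ab + ((0:ℝ), (0:ℝ), y₀, ‖y‖)))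
        ((0:ℝ),(1:ℝ)) (x₀,‖x‖)
      + 2*j/‖x‖ * fderiv ℝ (fun ab : ℝ × ℝ => T (L12 ab + ((0:ℝ), (0:ℝ), y₀, ‖y‖)))
        (x₀,‖x‖) ((0:ℝ),(1:ℝ)) = 0 := by
    have hmem : L12 (x₀, ‖x‖) + ((0:ℝ), (0:ℝ), y₀, ‖y‖) ∈ U4 := by
      rw [L12_pt]; exact hptmem x₀ ‖x‖ hr
    have h1 := dirDeriv2_affine L12 ((0:ℝ), (0:ℝ), y₀, ‖y‖) T hU4 hT (x₀,‖x‖)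
      ((1:ℝ),(0:ℝ)) hmem
    have h2 := dirDeriv2_affine L12 ((0:ℝ), (0:ℝ), y₀, ‖y‖) T hU4 hT (x₀,‖x‖)
      ((0:ℝ),(1:ℝ)) hmem
    have h3 := pd_affine L12 ((0:ℝ), (0:ℝ), y₀, ‖y‖) T (x₀,‖x‖) ((0:ℝ),(1:ℝ))
      (diffAt_of_smooth hU4 hT hmem)
    rw [h1, h2, h3,
      show L12 ((1:ℝ),(0:ℝ)) = ((1:ℝ),(0:ℝ),(0:ℝ),(0:ℝ)) from rfl,
      show L12 ((0:ℝ),(1:ℝ)) = ((0:ℝ),(1:ℝ),(0:ℝ),(0:ℝ)) from rfl, L12_pt]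
    exact hTpde (x₀,‖x‖,y₀,‖y‖) (hptmem x₀ ‖x‖ hr)
  -- transfers
  have hFsm := F_smooth T hT P hP
  have hGsm := G_smooth (fun ab : ℝ × ℝ => T (L12 ab + ((0:ℝ), (0:ℝ), y₀, ‖y‖))) hg
    (fun z : EuclideanSpace ℝ (Fin m) => P (z, y)) hQs
  have hmemG : ((x₀, x) : ℝ × EuclideanSpace ℝ (Fin m))
      ∈ (Set.univ ×ˢ ({(0:EuclideanSpace ℝ (Fin m))}ᶜ)) := ⟨Set.mem_univ _, hx⟩
  have ht0 : dirDeriv2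
        (fun p' : ℝ × EuclideanSpace ℝ (Fin m) × ℝ × EuclideanSpace ℝ (Fin m) =>
          T (p'.1, ‖p'.2.1‖, p'.2.2.1, ‖p'.2.2.2‖) * P (p'.2.1, p'.2.2.2))
        (1, 0, 0, 0) (x₀, x, y₀, y)
      = dirDeriv2 (fun q : ℝ × EuclideanSpace ℝ (Fin m) =>
          (fun ab : ℝ × ℝ => T (L12 ab + ((0:ℝ), (0:ℝ), y₀, ‖y‖))) (q.1, ‖q.2‖)
            * (fun z : EuclideanSpace ℝ (Fin m) => P (z, y)) q.2)
          ((1:ℝ), (0:EuclideanSpace ℝ (Fin m))) (x₀, x) := by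
    apply dirDeriv2_of_line_eq _ _ (hV4 m) G_open hFsm hGsm hpV hmemG
    intro t
    simp only [Prod.mk_add_mk, Prod.smul_mk, smul_eq_mul, mul_one, mul_zero,
      smul_zero, add_zero]
    rw [L12_pt]
  have hti : ∀ i : Fin m, dirDeriv2
        (fun p' : ℝ × EuclideanSpace ℝ (Fin m) × ℝ × EuclideanSpace ℝ (Fin m) =>
          T (p'.1, ‖p'.2.1‖, p'.2.2.1, ‖p'.2.2.2‖) * P (p'.2.1, p'.2.2.2))
        (0, EuclideanSpace.single i 1, 0, 0) (x₀, x, y₀, y)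
      = dirDeriv2 (fun q : ℝ × EuclideanSpace ℝ (Fin m) =>
          (fun ab : ℝ × ℝ => T (L12 ab + ((0:ℝ), (0:ℝ), y₀, ‖y‖))) (q.1, ‖q.2‖)
            * (fun z : EuclideanSpace ℝ (Fin m) => P (z, y)) q.2)
          ((0:ℝ), EuclideanSpace.single i 1) (x₀, x) := by
    intro i
    apply dirDeriv2_of_line_eq _ _ (hV4 m) G_open hFsm hGsm hpV hmemG
    intro t
    simp only [Prod.mk_add_mk, Prod.smul_mk, smul_eq_mul, mul_one, mul_zero,
      smul_zero, add_zero, zero_add]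
    rw [L12_pt]
  have hcore := core_sum m k (fun ab : ℝ × ℝ => T (L12 ab + ((0:ℝ), (0:ℝ), y₀, ‖y‖))) hg
    (fun z : EuclideanSpace ℝ (Fin m) => P (z, y)) hQs x₀ x hx
    (hPharmx y x hx) (hPE x y) j hgpde
  show dirDeriv2 _ (1,0,0,0) _ + ∑ i : Fin m, dirDeriv2 _ (0, EuclideanSpace.single i 1, 0, 0) _ = _
  rw [ht0, Finset.sum_congr rfl fun i _ => hti i, hcore,
    pd_affine L12 ((0:ℝ), (0:ℝ), y₀, ‖y‖) T (x₀,‖x‖) ((0:ℝ),(1:ℝ))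
      (diffAt_of_smooth hU4 hT (by rw [L12_pt]; exact hptmem x₀ ‖x‖ hr)),
    show L12 ((0:ℝ),(1:ℝ)) = ((0:ℝ),(1:ℝ),(0:ℝ),(0:ℝ)) from rfl, L12_pt]
  exact mul_assoc _ _ _

end LapStep

section LapStepY
variable {m : ℕ}

theorem lap_step_y (l : ℕ)
    (P : EuclideanSpace ℝ (Fin m) × EuclideanSpace ℝ (Fin m) → ℝ) (hP : ContDiff ℝ ∞ P)
    (hPharmy : ∀ x y : EuclideanSpace ℝ (Fin m), y ≠ 0 →
      ∑ i : Fin m, dirDeriv2 (fun y' => P (x, y')) (EuclideanSpace.single i 1) y = 0)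
    (hPE : ∀ x y : EuclideanSpace ℝ (Fin m),
      fderiv ℝ (fun y' => P (x, y')) y y = (l:ℝ) * P (x, y))
    (T : ℝ × ℝ × ℝ × ℝ → ℝ) (hT : ContDiffOn ℝ ∞ T U4) (j : ℝ)
    (hTpde : ∀ q ∈ U4, dirDeriv2 T (0,0,1,0) q + dirDeriv2 T (0,0,0,1) q
      + 2*j/(q.2.2.2) * fderiv ℝ T q (0,0,0,1) = 0)
    (x₀ y₀ : ℝ) (x y : EuclideanSpace ℝ (Fin m)) (hx : x ≠ 0) (hy : y ≠ 0) :
    lapY m (fun p' => T (p'.1, ‖p'.2.1‖, p'.2.2.1, ‖p'.2.2.2‖) * P (p'.2.1, p'.2.2.2))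
        (x₀, x, y₀, y)
      = (2*(l:ℝ) + m - 1 - 2*j)
        * (D4op T (x₀, ‖x‖, y₀, ‖y‖) * P (x, y)) := by
  have hr : 0 < ‖x‖ := norm_pos_iff.mpr hx
  have hρ : 0 < ‖y‖ := norm_pos_iff.mpr hy
  have hpV : ((x₀, x, y₀, y) : ℝ × EuclideanSpace ℝ (Fin m) × ℝ × EuclideanSpace ℝ (Fin m))
      ∈ V4 m := ⟨hx, hy⟩
  have hptmem : ∀ c d : ℝ, 0 < d → ((x₀, ‖x‖, c, d) : ℝ × ℝ × ℝ × ℝ) ∈ U4 :=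
    fun c d hd => mem_U4.mpr ⟨hr, hd⟩
  have hg : ContDiffOn ℝ ∞ (fun cd : ℝ × ℝ => T (L34 cd + (x₀, ‖x‖, (0:ℝ), (0:ℝ))))
      (Set.univ ×ˢ Set.Ioi (0:ℝ)) := by
    apply hT.comp ((L34.contDiff.add contDiff_const).contDiffOn)
    intro cd hcd
    show L34 cd + (x₀, ‖x‖, (0:ℝ), (0:ℝ)) ∈ U4
    rw [show (cd : ℝ × ℝ) = (cd.1, cd.2) from rfl, L34_pt]
    exact hptmem cd.1 cd.2 hcd.2
  have hQs : ContDiff ℝ ∞ (fun z : EuclideanSpace ℝ (Fin m) => P (x, z)) :=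
    hP.comp (contDiff_const.prodMk contDiff_id)
  have hgpde : dirDeriv2 (fun cd : ℝ × ℝ => T (L34 cd + (x₀, ‖x‖, (0:ℝ), (0:ℝ))))
        ((1:ℝ),(0:ℝ)) (y₀,‖y‖)
      + dirDeriv2 (fun cd : ℝ × ℝ => T (L34 cd + (x₀, ‖x‖, (0:ℝ), (0:ℝ))))
        ((0:ℝ),(1:ℝ)) (y₀,‖y‖)
      + 2*j/‖y‖ * fderiv ℝ (fun cd : ℝ × ℝ => T (L34 cd + (x₀, ‖x‖, (0:ℝ), (0:ℝ))))
        (y₀,‖y‖) ((0:ℝ),(1:ℝ)) = 0 := by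
    have hmem : L34 (y₀, ‖y‖) + (x₀, ‖x‖, (0:ℝ), (0:ℝ)) ∈ U4 := by
      rw [L34_pt]; exact hptmem y₀ ‖y‖ hρ
    have h1 := dirDeriv2_affine L34 (x₀, ‖x‖, (0:ℝ), (0:ℝ)) T hU4 hT (y₀,‖y‖)
      ((1:ℝ),(0:ℝ)) hmem
    have h2 := dirDeriv2_affine L34 (x₀, ‖x‖, (0:ℝ), (0:ℝ)) T hU4 hT (y₀,‖y‖)
      ((0:ℝ),(1:ℝ)) hmem
    have h3 := pd_affine L34 (x₀, ‖x‖, (0:ℝ), (0:ℝ)) T (y₀,‖y‖) ((0:ℝ),(1:ℝ))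
      (diffAt_of_smooth hU4 hT hmem)
    rw [h1, h2, h3,
      show L34 ((1:ℝ),(0:ℝ)) = ((0:ℝ),(0:ℝ),(1:ℝ),(0:ℝ)) from rfl,
      show L34 ((0:ℝ),(1:ℝ)) = ((0:ℝ),(0:ℝ),(0:ℝ),(1:ℝ)) from rfl, L34_pt]
    exact hTpde (x₀,‖x‖,y₀,‖y‖) (hptmem y₀ ‖y‖ hρ)
  have hFsm := F_smooth T hT P hP
  have hGsm := G_smooth (fun cd : ℝ × ℝ => T (L34 cd + (x₀, ‖x‖, (0:ℝ), (0:ℝ)))) hg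
    (fun z : EuclideanSpace ℝ (Fin m) => P (x, z)) hQs
  have hmemG : ((y₀, y) : ℝ × EuclideanSpace ℝ (Fin m))
      ∈ (Set.univ ×ˢ ({(0:EuclideanSpace ℝ (Fin m))}ᶜ)) := ⟨Set.mem_univ _, hy⟩
  have ht0 : dirDeriv2
        (fun p' : ℝ × EuclideanSpace ℝ (Fin m) × ℝ × EuclideanSpace ℝ (Fin m) =>
          T (p'.1, ‖p'.2.1‖, p'.2.2.1, ‖p'.2.2.2‖) * P (p'.2.1, p'.2.2.2))
        (0, 0, 1, 0) (x₀, x, y₀, y)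
      = dirDeriv2 (fun q : ℝ × EuclideanSpace ℝ (Fin m) =>
          (fun cd : ℝ × ℝ => T (L34 cd + (x₀, ‖x‖, (0:ℝ), (0:ℝ)))) (q.1, ‖q.2‖)
            * (fun z : EuclideanSpace ℝ (Fin m) => P (x, z)) q.2)
          ((1:ℝ), (0:EuclideanSpace ℝ (Fin m))) (y₀, y) := by
    apply dirDeriv2_of_line_eq _ _ (hV4 m) G_open hFsm hGsm hpV hmemG
    intro t
    simp only [Prod.mk_add_mk, Prod.smul_mk, smul_eq_mul, mul_one, mul_zero,
      smul_zero, add_zero, zero_add]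
    rw [L34_pt]
  have hti : ∀ i : Fin m, dirDeriv2
        (fun p' : ℝ × EuclideanSpace ℝ (Fin m) × ℝ × EuclideanSpace ℝ (Fin m) =>
          T (p'.1, ‖p'.2.1‖, p'.2.2.1, ‖p'.2.2.2‖) * P (p'.2.1, p'.2.2.2))
        (0, 0, 0, EuclideanSpace.single i 1) (x₀, x, y₀, y)
      = dirDeriv2 (fun q : ℝ × EuclideanSpace ℝ (Fin m) =>
          (fun cd : ℝ × ℝ => T (L34 cd + (x₀, ‖x‖, (0:ℝ), (0:ℝ)))) (q.1, ‖q.2‖)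
            * (fun z : EuclideanSpace ℝ (Fin m) => P (x, z)) q.2)
          ((0:ℝ), EuclideanSpace.single i 1) (y₀, y) := by
    intro i
    apply dirDeriv2_of_line_eq _ _ (hV4 m) G_open hFsm hGsm hpV hmemG
    intro t
    simp only [Prod.mk_add_mk, Prod.smul_mk, smul_eq_mul, mul_one, mul_zero,
      smul_zero, add_zero, zero_add]
    rw [L34_pt]
  have hcore := core_sum m l (fun cd : ℝ × ℝ => T (L34 cd + (x₀, ‖x‖, (0:ℝ), (0:ℝ)))) hg
    (fun z : EuclideanSpace ℝ (Fin m) => P (x, z)) hQs y₀ y hy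
    (hPharmy x y hy) (hPE x y) j hgpde
  show dirDeriv2 _ (0,0,1,0) _ + ∑ i : Fin m, dirDeriv2 _ (0, 0, 0, EuclideanSpace.single i 1) _ = _
  rw [ht0, Finset.sum_congr rfl fun i _ => hti i, hcore,
    pd_affine L34 (x₀, ‖x‖, (0:ℝ), (0:ℝ)) T (y₀,‖y‖) ((0:ℝ),(1:ℝ))
      (diffAt_of_smooth hU4 hT (by rw [L34_pt]; exact hptmem y₀ ‖y‖ hρ)),
    show L34 ((0:ℝ),(1:ℝ)) = ((0:ℝ),(0:ℝ),(0:ℝ),(1:ℝ)) from rfl, L34_pt]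
  exact mul_assoc _ _ _

end LapStepY

section Iteration
variable {m : ℕ}

theorem lapY_const_mul {f : ℝ × EuclideanSpace ℝ (Fin m) × ℝ × EuclideanSpace ℝ (Fin m) → ℝ}
    {U : Set (ℝ × EuclideanSpace ℝ (Fin m) × ℝ × EuclideanSpace ℝ (Fin m))}
    (hU : IsOpen U) (hf : ContDiffOn ℝ ∞ f U) (c : ℝ) {p} (hp : p ∈ U) :
    lapY m (fun q => c * f q) p = c * lapY m f p := by
  show dirDeriv2 (fun q => c * f q) (0,0,1,0) p
      + ∑ i : Fin m, dirDeriv2 (fun q => c * f q) (0, 0, 0, EuclideanSpace.single i 1) p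
    = c * (dirDeriv2 f (0,0,1,0) p
      + ∑ i : Fin m, dirDeriv2 f (0, 0, 0, EuclideanSpace.single i 1) p)
  rw [dirDeriv2_const_mul f hU hf hp, mul_add, Finset.mul_sum]
  exact congrArg _ (Finset.sum_congr rfl fun i _ => dirDeriv2_const_mul f hU hf hp _ _)

theorem lapY_iter (l : ℕ)
    (P : EuclideanSpace ℝ (Fin m) × EuclideanSpace ℝ (Fin m) → ℝ) (hP : ContDiff ℝ ∞ P)
    (hPharmy : ∀ x y : EuclideanSpace ℝ (Fin m), y ≠ 0 →
      ∑ i : Fin m, dirDeriv2 (fun y' => P (x, y')) (EuclideanSpace.single i 1) y = 0)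
    (hPE : ∀ x y : EuclideanSpace ℝ (Fin m),
      fderiv ℝ (fun y' => P (x, y')) y y = (l:ℝ) * P (x, y))
    (h : ℝ × ℝ × ℝ × ℝ → ℝ) (hh : ContDiffOn ℝ ∞ h U4)
    (hharmY : ∀ q ∈ U4, dirDeriv2 h (0,0,1,0) q + dirDeriv2 h (0,0,0,1) q = 0)
    (n' : ℕ) :
    ∀ p ∈ V4 m, (lapY m)^[n']
        (fun p' => h (p'.1, ‖p'.2.1‖, p'.2.2.1, ‖p'.2.2.2‖) * P (p'.2.1, p'.2.2.2)) p
      = (∏ j ∈ Finset.range n', (2*(l:ℝ) + m - (2*(j:ℝ)+1)))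
        * (D4op^[n'] h (p.1, ‖p.2.1‖, p.2.2.1, ‖p.2.2.2‖) * P (p.2.1, p.2.2.2)) := by
  induction n' with
  | zero =>
    intro p hp
    simp only [Function.iterate_zero, id_eq, Finset.range_zero, Finset.prod_empty, one_mul]
  | succ n' ih =>
    intro p hp
    obtain ⟨x₀, x, y₀, y⟩ := p
    obtain ⟨hx, hy⟩ := hp
    rw [Function.iterate_succ_apply']
    rw [lapY_congr (hV4 m) (fun q hq => ih q hq) (⟨hx, hy⟩ :
      ((x₀, x, y₀, y) : ℝ × EuclideanSpace ℝ (Fin m) × ℝ × EuclideanSpace ℝ (Fin m)) ∈ V4 m)]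
    rw [lapY_const_mul (hV4 m) (F_smooth _ (D4op_iter_smooth hh n') P hP) _ ⟨hx, hy⟩]
    rw [lap_step_y l P hP hPharmy hPE (D4op^[n'] h) (D4op_iter_smooth hh n') (n':ℝ)
      (pde_y_iter hh hharmY n') x₀ y₀ x y hx hy]
    rw [Finset.prod_range_succ, ← Function.iterate_succ_apply' D4op]
    push_cast
    ring

theorem lapX_iter (k : ℕ)
    (P : EuclideanSpace ℝ (Fin m) × EuclideanSpace ℝ (Fin m) → ℝ) (hP : ContDiff ℝ ∞ P)
    (hPharmx : ∀ y x : EuclideanSpace ℝ (Fin m), x ≠ 0 →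
      ∑ i : Fin m, dirDeriv2 (fun x' => P (x', y)) (EuclideanSpace.single i 1) x = 0)
    (hPE : ∀ x y : EuclideanSpace ℝ (Fin m),
      fderiv ℝ (fun x' => P (x', y)) x x = (k:ℝ) * P (x, y))
    (T : ℝ × ℝ × ℝ × ℝ → ℝ) (hT : ContDiffOn ℝ ∞ T U4)
    (hbaseX : ∀ q ∈ U4, dirDeriv2 T (1,0,0,0) q + dirDeriv2 T (0,1,0,0) q = 0)
    (c : ℝ) (n : ℕ) :
    ∀ p ∈ V4 m, (lapX m)^[n]
        (fun p' => c * (T (p'.1, ‖p'.2.1‖, p'.2.2.1, ‖p'.2.2.2‖) * P (p'.2.1, p'.2.2.2))) p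
      = c * (∏ j ∈ Finset.range n, (2*(k:ℝ) + m - (2*(j:ℝ)+1)))
        * (D2op^[n] T (p.1, ‖p.2.1‖, p.2.2.1, ‖p.2.2.2‖) * P (p.2.1, p.2.2.2)) := by
  induction n with
  | zero =>
    intro p hp
    simp only [Function.iterate_zero, id_eq, Finset.range_zero, Finset.prod_empty, mul_one]
  | succ n ih =>
    intro p hp
    obtain ⟨x₀, x, y₀, y⟩ := p
    obtain ⟨hx, hy⟩ := hp
    rw [Function.iterate_succ_apply']
    rw [lapX_congr (hV4 m) (fun q hq => ih q hq) (⟨hx, hy⟩ :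
      ((x₀, x, y₀, y) : ℝ × EuclideanSpace ℝ (Fin m) × ℝ × EuclideanSpace ℝ (Fin m)) ∈ V4 m)]
    rw [lapX_const_mul (hV4 m) (F_smooth _ (D2op_iter_smooth hT n) P hP) _ ⟨hx, hy⟩]
    rw [lap_step_x k P hP hPharmx hPE (D2op^[n] T) (D2op_iter_smooth hT n) (n:ℝ)
      (pde_x_iter2 hT hbaseX n) x₀ y₀ x y hx hy]
    rw [Finset.prod_range_succ, ← Function.iterate_succ_apply' D2op]
    push_cast
    ring

theorem lapX_iter_congr {f g : ℝ × EuclideanSpace ℝ (Fin m) × ℝ × EuclideanSpace ℝ (Fin m) → ℝ}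
    (h : Set.EqOn f g (V4 m)) (n : ℕ) :
    Set.EqOn ((lapX m)^[n] f) ((lapX m)^[n] g) (V4 m) := by
  induction n with
  | zero => exact h
  | succ n ih =>
    rw [Function.iterate_succ_apply', Function.iterate_succ_apply']
    exact lapX_congr (hV4 m) ih

end Iteration

section Slices

noncomputable def K1 : ℝ →L[ℝ] (ℝ × ℝ × ℝ × ℝ) :=
  (ContinuousLinearMap.id ℝ ℝ).prod 0

noncomputable def K2 : ℝ →L[ℝ] (ℝ × ℝ × ℝ × ℝ) :=
  (0 : ℝ →L[ℝ] ℝ).prod ((ContinuousLinearMap.id ℝ ℝ).prod 0)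

noncomputable def K3 : ℝ →L[ℝ] (ℝ × ℝ × ℝ × ℝ) :=
  (0 : ℝ →L[ℝ] ℝ).prod ((0 : ℝ →L[ℝ] ℝ).prod ((ContinuousLinearMap.id ℝ ℝ).prod 0))

noncomputable def K4 : ℝ →L[ℝ] (ℝ × ℝ × ℝ × ℝ) :=
  (0 : ℝ →L[ℝ] ℝ).prod ((0 : ℝ →L[ℝ] ℝ).prod ((0 : ℝ →L[ℝ] ℝ).prod
    (ContinuousLinearMap.id ℝ ℝ)))

theorem K1_pt (a b c d : ℝ) : K1 a + ((0:ℝ), b, c, d) = (a, b, c, d) := by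
  show ((a, (0:ℝ), (0:ℝ), (0:ℝ)) : ℝ × ℝ × ℝ × ℝ) + (0, b, c, d) = (a, b, c, d)
  simp [Prod.mk_add_mk]

theorem K2_pt (a b c d : ℝ) : K2 b + (a, (0:ℝ), c, d) = (a, b, c, d) := by
  show (((0:ℝ), b, (0:ℝ), (0:ℝ)) : ℝ × ℝ × ℝ × ℝ) + (a, 0, c, d) = (a, b, c, d)
  simp [Prod.mk_add_mk]

theorem K3_pt (a b c d : ℝ) : K3 c + (a, b, (0:ℝ), d) = (a, b, c, d) := by
  show (((0:ℝ), (0:ℝ), c, (0:ℝ)) : ℝ × ℝ × ℝ × ℝ) + (a, b, 0, d) = (a, b, c, d)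
  simp [Prod.mk_add_mk]

theorem K4_pt (a b c d : ℝ) : K4 d + (a, b, c, (0:ℝ)) = (a, b, c, d) := by
  show (((0:ℝ), (0:ℝ), (0:ℝ), d) : ℝ × ℝ × ℝ × ℝ) + (a, b, c, 0) = (a, b, c, d)
  simp [Prod.mk_add_mk]

theorem harmX_conv {h : ℝ × ℝ × ℝ × ℝ → ℝ} (hh : ContDiffOn ℝ ∞ h U4)
    (hhharmx : ∀ a b c d : ℝ, 0 < b → 0 < d →
      iteratedDeriv 2 (fun s => h (s, b, c, d)) a
        + iteratedDeriv 2 (fun s => h (a, s, c, d)) b = 0) :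
    ∀ q ∈ U4, dirDeriv2 h (1,0,0,0) q + dirDeriv2 h (0,1,0,0) q = 0 := by
  rintro ⟨a, b, c, d⟩ hq
  obtain ⟨hb, hd⟩ := mem_U4.mp hq
  have h1 : iteratedDeriv 2 (fun s => h (s, b, c, d)) a = dirDeriv2 h (1,0,0,0) (a,b,c,d) := by
    have he : (fun s : ℝ => h (s, b, c, d)) = fun s : ℝ => h (K1 s + ((0:ℝ), b, c, d)) := by
      funext s; rw [K1_pt]
    rw [he, deriv2_slice K1 ((0:ℝ), b, c, d) h hU4 hh a
      (by rw [K1_pt]; exact mem_U4.mpr ⟨hb, hd⟩)]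
    rw [show K1 (1:ℝ) = ((1:ℝ),(0:ℝ),(0:ℝ),(0:ℝ)) from rfl, K1_pt]
  have h2 : iteratedDeriv 2 (fun s => h (a, s, c, d)) b = dirDeriv2 h (0,1,0,0) (a,b,c,d) := by
    have he : (fun s : ℝ => h (a, s, c, d)) = fun s : ℝ => h (K2 s + (a, (0:ℝ), c, d)) := by
      funext s; rw [K2_pt]
    rw [he, deriv2_slice K2 (a, (0:ℝ), c, d) h hU4 hh b
      (by rw [K2_pt]; exact mem_U4.mpr ⟨hb, hd⟩)]
    rw [show K2 (1:ℝ) = ((0:ℝ),(1:ℝ),(0:ℝ),(0:ℝ)) from rfl, K2_pt]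
  rw [← h1, ← h2]
  exact hhharmx a b c d hb hd

theorem harmY_conv {h : ℝ × ℝ × ℝ × ℝ → ℝ} (hh : ContDiffOn ℝ ∞ h U4)
    (hhharmy : ∀ a b c d : ℝ, 0 < b → 0 < d →
      iteratedDeriv 2 (fun s => h (a, b, s, d)) c
        + iteratedDeriv 2 (fun s => h (a, b, c, s)) d = 0) :
    ∀ q ∈ U4, dirDeriv2 h (0,0,1,0) q + dirDeriv2 h (0,0,0,1) q = 0 := by
  rintro ⟨a, b, c, d⟩ hq
  obtain ⟨hb, hd⟩ := mem_U4.mp hq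
  have h1 : iteratedDeriv 2 (fun s => h (a, b, s, d)) c = dirDeriv2 h (0,0,1,0) (a,b,c,d) := by
    have he : (fun s : ℝ => h (a, b, s, d)) = fun s : ℝ => h (K3 s + (a, b, (0:ℝ), d)) := by
      funext s; rw [K3_pt]
    rw [he, deriv2_slice K3 (a, b, (0:ℝ), d) h hU4 hh c
      (by rw [K3_pt]; exact mem_U4.mpr ⟨hb, hd⟩)]
    rw [show K3 (1:ℝ) = ((0:ℝ),(0:ℝ),(1:ℝ),(0:ℝ)) from rfl, K3_pt]
  have h2 : iteratedDeriv 2 (fun s => h (a, b, c, s)) d = dirDeriv2 h (0,0,0,1) (a,b,c,d) := by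
    have he : (fun s : ℝ => h (a, b, c, s)) = fun s : ℝ => h (K4 s + (a, b, c, (0:ℝ))) := by
      funext s; rw [K4_pt]
    rw [he, deriv2_slice K4 (a, b, c, (0:ℝ)) h hU4 hh d
      (by rw [K4_pt]; exact mem_U4.mpr ⟨hb, hd⟩)]
    rw [show K4 (1:ℝ) = ((0:ℝ),(0:ℝ),(0:ℝ),(1:ℝ)) from rfl, K4_pt]
  rw [← h1, ← h2]
  exact hhharmy a b c d hb hd

theorem Dlow_slice4 {h : ℝ × ℝ × ℝ × ℝ → ℝ} (hh : ContDiffOn ℝ ∞ h U4) (j : ℕ) :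
    ∀ a b c d : ℝ, 0 < b → 0 < d →
      Dlow j (fun ρ => h (a, b, c, ρ)) d = D4op^[j] h (a, b, c, d) := by
  induction j with
  | zero => intro a b c d hb hd; rfl
  | succ j ih =>
    intro a b c d hb hd
    show deriv (Dlow j (fun ρ => h (a, b, c, ρ))) d / d = _
    have hev : Dlow j (fun ρ => h (a, b, c, ρ))
        =ᶠ[nhds d] fun ρ => D4op^[j] h (a, b, c, ρ) := by
      filter_upwards [Ioi_mem_nhds hd] with t ht
      exact ih a b c t hb ht
    rw [hev.deriv_eq]
    have he : (fun ρ : ℝ => D4op^[j] h (a, b, c, ρ))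
        = fun ρ : ℝ => D4op^[j] h (K4 ρ + (a, b, c, (0:ℝ))) := by
      funext ρ; rw [K4_pt]
    rw [he, deriv_slice K4 (a, b, c, (0:ℝ)) (D4op^[j] h) d
      (diffAt_of_smooth hU4 (D4op_iter_smooth hh j)
        (by rw [K4_pt]; exact mem_U4.mpr ⟨hb, hd⟩)),
      show K4 (1:ℝ) = ((0:ℝ),(0:ℝ),(0:ℝ),(1:ℝ)) from rfl, K4_pt,
      Function.iterate_succ_apply' D4op]
    rfl

theorem Dlow_slice2 {T : ℝ × ℝ × ℝ × ℝ → ℝ} (hT : ContDiffOn ℝ ∞ T U4) (n : ℕ) :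
    ∀ a b c d : ℝ, 0 < b → 0 < d →
      Dlow n (fun r => T (a, r, c, d)) b = D2op^[n] T (a, b, c, d) := by
  induction n with
  | zero => intro a b c d hb hd; rfl
  | succ n ih =>
    intro a b c d hb hd
    show deriv (Dlow n (fun r => T (a, r, c, d))) b / b = _
    have hev : Dlow n (fun r => T (a, r, c, d))
        =ᶠ[nhds b] fun r => D2op^[n] T (a, r, c, d) := by
      filter_upwards [Ioi_mem_nhds hb] with t ht
      exact ih a t c d ht hd
    rw [hev.deriv_eq]
    have he : (fun r : ℝ => D2op^[n] T (a, r, c, d))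
        = fun r : ℝ => D2op^[n] T (K2 r + (a, (0:ℝ), c, d)) := by
      funext r; rw [K2_pt]
    rw [he, deriv_slice K2 (a, (0:ℝ), c, d) (D2op^[n] T) b
      (diffAt_of_smooth hU4 (D2op_iter_smooth hT n)
        (by rw [K2_pt]; exact mem_U4.mpr ⟨hb, hd⟩)),
      show K2 (1:ℝ) = ((0:ℝ),(1:ℝ),(0:ℝ),(0:ℝ)) from rfl, K2_pt,
      Function.iterate_succ_apply' D2op]
    rfl

theorem Dlow_congr {f g : ℝ → ℝ} (h : Set.EqOn f g (Set.Ioi (0:ℝ))) (n : ℕ) :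
    ∀ b ∈ Set.Ioi (0:ℝ), Dlow n f b = Dlow n g b := by
  induction n with
  | zero => exact h
  | succ n ih =>
    intro b hb
    show deriv (Dlow n f) b / b = deriv (Dlow n g) b / b
    have hev : Dlow n f =ᶠ[nhds b] Dlow n g := by
      filter_upwards [Ioi_mem_nhds hb] with t ht
      exact ih t ht
    rw [hev.deriv_eq]

end Slices

theorem iterated_laplacians_h_mul_P (m k l n n' : ℕ) (hm : 1 ≤ m)
    (P : EuclideanSpace ℝ (Fin m) × EuclideanSpace ℝ (Fin m) → ℝ) (hP : ContDiff ℝ (⊤ : ℕ∞) P)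
    (hPharmx : ∀ y : EuclideanSpace ℝ (Fin m), ∀ x : EuclideanSpace ℝ (Fin m), x ≠ 0 →
      lapE m (fun x' => P (x', y)) x = 0)
    (hPharmy : ∀ x : EuclideanSpace ℝ (Fin m), ∀ y : EuclideanSpace ℝ (Fin m), y ≠ 0 →
      lapE m (fun y' => P (x, y')) y = 0)
    (hPhom : ∀ t₁ t₂ : ℝ, 0 < t₁ → 0 < t₂ →
      ∀ x y : EuclideanSpace ℝ (Fin m), P (t₁ • x, t₂ • y) = t₁ ^ k * t₂ ^ l * P (x, y))
    (h : ℝ × ℝ × ℝ × ℝ → ℝ)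
    (hh : ContDiffOn ℝ (⊤ : ℕ∞) h
      (Set.univ ×ˢ Set.Ioi (0 : ℝ) ×ˢ Set.univ ×ˢ Set.Ioi (0 : ℝ)))
    (hhharmx : ∀ a b c d : ℝ, 0 < b → 0 < d →
      iteratedDeriv 2 (fun s => h (s, b, c, d)) a
        + iteratedDeriv 2 (fun s => h (a, s, c, d)) b = 0)
    (hhharmy : ∀ a b c d : ℝ, 0 < b → 0 < d →
      iteratedDeriv 2 (fun s => h (a, b, s, d)) c
        + iteratedDeriv 2 (fun s => h (a, b, c, s)) d = 0)
    (x₀ y₀ : ℝ) (x y : EuclideanSpace ℝ (Fin m)) (hx : x ≠ 0) (hy : y ≠ 0) :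
    (lapX m)^[n] ((lapY m)^[n']
        (fun p => h (p.1, ‖p.2.1‖, p.2.2.1, ‖p.2.2.2‖) * P (p.2.1, p.2.2.2)))
        (x₀, x, y₀, y)
      = (∏ j ∈ Finset.range n, (2 * (k : ℝ) + m - (2 * (j : ℝ) + 1)))
          * (∏ j ∈ Finset.range n', (2 * (l : ℝ) + m - (2 * (j : ℝ) + 1)))
          * Dlow n (fun r => Dlow n' (fun ρ => h (x₀, r, y₀, ρ)) ‖y‖) ‖x‖
          * P (x, y) := by
  have hP' : ContDiff ℝ ∞ P := hP.of_le (by simp)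
  have hh' : ContDiffOn ℝ ∞ h U4 := hh.of_le (by simp)
  have hx' : ‖x‖ ∈ Set.Ioi (0:ℝ) := Set.mem_Ioi.mpr (norm_pos_iff.mpr hx)
  have hy' : ‖y‖ ∈ Set.Ioi (0:ℝ) := Set.mem_Ioi.mpr (norm_pos_iff.mpr hy)
  have hPharmx' : ∀ y x : EuclideanSpace ℝ (Fin m), x ≠ 0 →
      ∑ i : Fin m, dirDeriv2 (fun x' => P (x', y)) (EuclideanSpace.single i 1) x = 0 :=
    fun y x hx => hPharmx y x hx
  have hPharmy' : ∀ x y : EuclideanSpace ℝ (Fin m), y ≠ 0 →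
      ∑ i : Fin m, dirDeriv2 (fun y' => P (x, y')) (EuclideanSpace.single i 1) y = 0 :=
    fun x y hy => hPharmy x y hy
  have hPEx : ∀ x y : EuclideanSpace ℝ (Fin m),
      fderiv ℝ (fun x' => P (x', y)) x x = (k:ℝ) * P (x, y) := by
    intro x y
    apply euler_identity_s7 _ k x
    · exact ((hP'.comp (contDiff_id.prodMk contDiff_const)).differentiable
        (by norm_cast)).differentiableAt
    · intro t ht
      have := hPhom t 1 ht zero_lt_one x y
      simpa using this
  have hPEy : ∀ x y : EuclideanSpace ℝ (Fin m),
      fderiv ℝ (fun y' => P (x, y')) y y = (l:ℝ) * P (x, y) := by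
    intro x y
    apply euler_identity_s7 _ l y
    · exact ((hP'.comp (contDiff_const.prodMk contDiff_id)).differentiable
        (by norm_cast)).differentiableAt
    · intro t ht
      have := hPhom 1 t zero_lt_one ht x y
      simpa using this
  have hharmX := harmX_conv hh' hhharmx
  have hharmY := harmY_conv hh' hhharmy
  have hmemV : ((x₀, x, y₀, y) :
      ℝ × EuclideanSpace ℝ (Fin m) × ℝ × EuclideanSpace ℝ (Fin m)) ∈ V4 m := ⟨hx, hy⟩
  have hstep1 : Set.EqOn ((lapY m)^[n']
        (fun p => h (p.1, ‖p.2.1‖, p.2.2.1, ‖p.2.2.2‖) * P (p.2.1, p.2.2.2)))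
      (fun p' => (∏ j ∈ Finset.range n', (2 * (l : ℝ) + m - (2 * (j : ℝ) + 1)))
        * (D4op^[n'] h (p'.1, ‖p'.2.1‖, p'.2.2.1, ‖p'.2.2.2‖) * P (p'.2.1, p'.2.2.2)))
      (V4 m) :=
    fun p hp => lapY_iter l P hP' hPharmy' hPEy h hh' hharmY n' p hp
  rw [lapX_iter_congr hstep1 n hmemV]
  rw [lapX_iter k P hP' hPharmx' hPEx (D4op^[n'] h) (D4op_iter_smooth hh' n')
    (pde_x_iter hh' hharmX n') _ n (x₀, x, y₀, y) hmemV]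
  have htrans : Dlow n (fun r => Dlow n' (fun ρ => h (x₀, r, y₀, ρ)) ‖y‖) ‖x‖
      = D2op^[n] (D4op^[n'] h) (x₀, ‖x‖, y₀, ‖y‖) := by
    have hEq : Set.EqOn (fun r => Dlow n' (fun ρ => h (x₀, r, y₀, ρ)) ‖y‖)
        (fun r => D4op^[n'] h (x₀, r, y₀, ‖y‖)) (Set.Ioi (0:ℝ)) :=
      fun r hr => Dlow_slice4 hh' n' x₀ r y₀ ‖y‖ hr hy'
    rw [Dlow_congr hEq n ‖x‖ hx']
    exact Dlow_slice2 (D4op_iter_smooth hh' n') n x₀ ‖x‖ y₀ ‖y‖ hx' hy'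
  rw [htrans]
  ring
end

section
/- Let Ξ ⊆ ℝ × (0,∞) be open and let u, v : ℝ × ℝ → ℝ be C^∞ on Ξ and satisfy the Cauchy–Riemann equations ∂₁u = ∂₂v and ∂₂u = −∂₁v on Ξ (i.e. u + iv is holomorphic in the variable x₀ + i r). Then for every natural number n ≥ 1 and every (x₀, r) ∈ Ξ: ∂₁( D'_r(n){v} )(x₀,r) + ∂₂( D_r(n){u} )(x₀,r) = 0, where D_r(n) and D'_r(n) act in the second argument. -/
open scoped ContDiff

lemma two_le_infty : (2 : WithTop ℕ∞) ≤ ∞ := by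
  rw [show (2 : WithTop ℕ∞) = ((2:ℕ∞) : WithTop ℕ∞) from rfl]
  exact WithTop.coe_le_coe.2 le_top

lemma one_le_infty : (1 : WithTop ℕ∞) ≤ ∞ := le_trans (by norm_num) two_le_infty

noncomputable def pd (e : ℝ × ℝ) (h : ℝ × ℝ → ℝ) (p : ℝ × ℝ) : ℝ := fderiv ℝ h p e

lemma pd_contDiffOn {Ξ : Set (ℝ × ℝ)} (hΞ : IsOpen Ξ) {h : ℝ × ℝ → ℝ}
    (hh : ContDiffOn ℝ ∞ h Ξ) (e : ℝ × ℝ) : ContDiffOn ℝ ∞ (pd e h) Ξ := by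
  have h1 : ContDiffOn ℝ ∞ (fderiv ℝ h) Ξ :=
    ((contDiffOn_infty_iff_fderiv_of_isOpen hΞ).1 hh).2
  exact (ContinuousLinearMap.apply ℝ ℝ e).contDiff.comp_contDiffOn h1

lemma hasDerivAt_slice2 {h : ℝ × ℝ → ℝ} {p : ℝ × ℝ} {D : ℝ × ℝ →L[ℝ] ℝ}
    (hD : HasFDerivAt h D p) : HasDerivAt (fun ρ => h (p.1, ρ)) (D (0, 1)) p.2 := by
  have h1 : HasDerivAt (fun ρ : ℝ => ((p.1, ρ) : ℝ × ℝ)) (0, 1) p.2 :=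
    (hasDerivAt_const _ _).prodMk (hasDerivAt_id _)
  have := hD.comp_hasDerivAt p.2 (by simpa using h1)
  exact this

lemma hasDerivAt_slice1 {h : ℝ × ℝ → ℝ} {p : ℝ × ℝ} {D : ℝ × ℝ →L[ℝ] ℝ}
    (hD : HasFDerivAt h D p) : HasDerivAt (fun s => h (s, p.2)) (D (1, 0)) p.1 := by
  have h1 : HasDerivAt (fun s : ℝ => ((s, p.2) : ℝ × ℝ)) (1, 0) p.1 :=
    (hasDerivAt_id _).prodMk (hasDerivAt_const _ _)
  have := hD.comp_hasDerivAt p.1 (by simpa using h1)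
  exact this

lemma pd2_eq {h : ℝ × ℝ → ℝ} {p : ℝ × ℝ} (hd : DifferentiableAt ℝ h p) :
    deriv (fun ρ => h (p.1, ρ)) p.2 = pd (0, 1) h p :=
  (hasDerivAt_slice2 hd.hasFDerivAt).deriv

lemma pd1_eq {h : ℝ × ℝ → ℝ} {p : ℝ × ℝ} (hd : DifferentiableAt ℝ h p) :
    deriv (fun s => h (s, p.2)) p.1 = pd (1, 0) h p :=
  (hasDerivAt_slice1 hd.hasFDerivAt).deriv

lemma pd_comm_s9 {h : ℝ × ℝ → ℝ} {p : ℝ × ℝ} (hh : ContDiffAt ℝ ∞ h p) (e₁ e₂ : ℝ × ℝ) :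
    pd e₁ (pd e₂ h) p = pd e₂ (pd e₁ h) p := by
  have hsym : IsSymmSndFDerivAt ℝ h p := hh.isSymmSndFDerivAt (by simpa [minSmoothness_of_isRCLikeNormedField] using two_le_infty)
  have hdf : DifferentiableAt ℝ (fderiv ℝ h) p :=
    (hh.fderiv_right (le_of_eq (show (∞ : WithTop ℕ∞) + 1 = ∞ from rfl))).differentiableAt
      (by simp)
  have key : ∀ e : ℝ × ℝ, fderiv ℝ (pd e h) p =
      (ContinuousLinearMap.apply ℝ ℝ e).comp (fderiv ℝ (fderiv ℝ h) p) := by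
    intro e
    exact ((ContinuousLinearMap.apply ℝ ℝ e).hasFDerivAt.comp p hdf.hasFDerivAt).fderiv
  show fderiv ℝ (pd e₂ h) p e₁ = fderiv ℝ (pd e₁ h) p e₂
  rw [key e₂, key e₁]
  exact hsym e₁ e₂

noncomputable def Glow (u : ℝ × ℝ → ℝ) (n : ℕ) (p : ℝ × ℝ) : ℝ :=
  Dlow n (fun ρ => u (p.1, ρ)) p.2

noncomputable def Gup (v : ℝ × ℝ → ℝ) (n : ℕ) (p : ℝ × ℝ) : ℝ :=
  Dup n (fun ρ => v (p.1, ρ)) p.2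

lemma Glow_succ (u : ℝ × ℝ → ℝ) (n : ℕ) (p : ℝ × ℝ) :
    Glow u (n+1) p = deriv (fun ρ => Glow u n (p.1, ρ)) p.2 / p.2 := rfl

lemma Gup_succ (v : ℝ × ℝ → ℝ) (n : ℕ) (p : ℝ × ℝ) :
    Gup v (n+1) p = deriv (fun ρ => Gup v n (p.1, ρ) / ρ) p.2 := rfl

section Main

variable {Ξ : Set (ℝ × ℝ)} (hΞ : IsOpen Ξ)
  (hΞsub : Ξ ⊆ Set.univ ×ˢ Set.Ioi (0 : ℝ)) {u v : ℝ × ℝ → ℝ}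

include hΞsub in
lemma hne : ∀ p ∈ Ξ, p.2 ≠ 0 := fun _ hp => ne_of_gt ((hΞsub hp).2)

include hΞ hΞsub in
lemma Glow_contDiffOn (hu : ContDiffOn ℝ ∞ u Ξ) (n : ℕ) :
    ContDiffOn ℝ ∞ (Glow u n) Ξ := by
  induction n with
  | zero => exact hu
  | succ n ih =>
    have key : ContDiffOn ℝ ∞ (fun p => pd (0,1) (Glow u n) p / p.2) Ξ :=
      (pd_contDiffOn hΞ ih _).div contDiff_snd.contDiffOn (hne hΞsub)
    refine key.congr fun p hp => ?_
    have hd : DifferentiableAt ℝ (Glow u n) p :=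
      (ih.contDiffAt (hΞ.mem_nhds hp)).differentiableAt (by simp)
    rw [Glow_succ, pd2_eq hd]

include hΞ hΞsub in
lemma Gup_aux_contDiffOn (hv : ContDiffOn ℝ ∞ v Ξ) (n : ℕ) :
    ContDiffOn ℝ ∞ (Gup v n) Ξ ∧
      ∀ p ∈ Ξ, Gup v (n+1) p = pd (0,1) (fun q => Gup v n q / q.2) p := by
  induction n with
  | zero =>
    refine ⟨hv, fun p hp => ?_⟩
    have hH : ContDiffOn ℝ ∞ (fun q : ℝ × ℝ => Gup v 0 q / q.2) Ξ :=
      hv.div contDiff_snd.contDiffOn (hne hΞsub)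
    have hd : DifferentiableAt ℝ (fun q : ℝ × ℝ => Gup v 0 q / q.2) p :=
      (hH.contDiffAt (hΞ.mem_nhds hp)).differentiableAt (by simp)
    rw [Gup_succ, pd2_eq hd]
  | succ n ih =>
    obtain ⟨ihs, ihf⟩ := ih
    have hH : ContDiffOn ℝ ∞ (fun q : ℝ × ℝ => Gup v n q / q.2) Ξ :=
      ihs.div contDiff_snd.contDiffOn (hne hΞsub)
    have hs : ContDiffOn ℝ ∞ (Gup v (n+1)) Ξ :=
      (pd_contDiffOn hΞ hH _).congr ihf
    refine ⟨hs, fun p hp => ?_⟩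
    have hH' : ContDiffOn ℝ ∞ (fun q : ℝ × ℝ => Gup v (n+1) q / q.2) Ξ :=
      hs.div contDiff_snd.contDiffOn (hne hΞsub)
    have hd : DifferentiableAt ℝ (fun q : ℝ × ℝ => Gup v (n+1) q / q.2) p :=
      (hH'.contDiffAt (hΞ.mem_nhds hp)).differentiableAt (by simp)
    rw [Gup_succ, pd2_eq hd]

include hΞ hΞsub in
lemma vekua_key (hu : ContDiffOn ℝ ∞ u Ξ) (hv : ContDiffOn ℝ ∞ v Ξ)
    (hCR₂ : ∀ p ∈ Ξ, deriv (fun s => u (p.1, s)) p.2 = -deriv (fun s => v (s, p.2)) p.1)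
    (n : ℕ) : ∀ p ∈ Ξ, pd (0,1) (Glow u n) p = - pd (1,0) (Gup v n) p := by
  induction n with
  | zero =>
    intro p hp
    have hdu : DifferentiableAt ℝ u p :=
      (hu.contDiffAt (hΞ.mem_nhds hp)).differentiableAt (by simp)
    have hdv : DifferentiableAt ℝ v p :=
      (hv.contDiffAt (hΞ.mem_nhds hp)).differentiableAt (by simp)
    show pd (0,1) u p = - pd (1,0) v p
    rw [← pd2_eq hdu, ← pd1_eq hdv]
    exact hCR₂ p hp
  | succ n ih =>
    intro p hp
    set F := pd (0,1) (Glow u n) with hF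
    set K := Gup v n with hK
    set H := fun q : ℝ × ℝ => K q / q.2 with hHdef
    have hGlows := Glow_contDiffOn hΞ hΞsub hu
    have hGups := (Gup_aux_contDiffOn hΞ hΞsub hv n).1
    have hGupf := (Gup_aux_contDiffOn hΞ hΞsub hv n).2
    have hHs : ContDiffOn ℝ ∞ H Ξ := hGups.div contDiff_snd.contDiffOn (hne hΞsub)
    -- eqΞ₁ : Glow u (n+1) = F / q.2 on Ξ
    have eqΞ₁ : Set.EqOn (Glow u (n+1)) (fun q => F q / q.2) Ξ := by
      intro q hq
      have hd : DifferentiableAt ℝ (Glow u n) q :=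
        ((hGlows n).contDiffAt (hΞ.mem_nhds hq)).differentiableAt (by simp)
      rw [Glow_succ, pd2_eq hd]
    -- eqΞ₂ : Gup v (n+1) = pd (0,1) H on Ξ
    have eqΞ₂ : Set.EqOn (Gup v (n+1)) (pd (0,1) H) Ξ := hGupf
    -- eqΞ₃ : pd (1,0) H = -F / q.2 on Ξ
    have eqΞ₃ : Set.EqOn (pd (1,0) H) (fun q => -F q / q.2) Ξ := by
      intro q hq
      have hdK : DifferentiableAt ℝ K q :=
        (hGups.contDiffAt (hΞ.mem_nhds hq)).differentiableAt (by simp)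
      have hdH : DifferentiableAt ℝ H q :=
        ((hHs q hq).contDiffAt (hΞ.mem_nhds hq)).differentiableAt (by simp)
      have hIH : pd (1,0) K q = - F q := by
        have h0 : F q = - pd (1,0) K q := ih q hq
        linarith
      calc pd (1,0) H q = deriv (fun s => H (s, q.2)) q.1 := (pd1_eq hdH).symm
        _ = deriv (fun s => K (s, q.2) / q.2) q.1 := rfl
        _ = deriv (fun s => K (s, q.2)) q.1 / q.2 := deriv_div_const _
        _ = pd (1,0) K q / q.2 := by rw [pd1_eq hdK]
        _ = -F q / q.2 := by rw [hIH]
    have mem : Ξ ∈ nhds p := hΞ.mem_nhds hp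
    have h1 : pd (0,1) (Glow u (n+1)) p = pd (0,1) (fun q => F q / q.2) p := by
      show fderiv ℝ _ p _ = fderiv ℝ _ p _
      rw [Filter.EventuallyEq.fderiv_eq (Filter.eventuallyEq_of_mem mem eqΞ₁)]
    have h2 : pd (1,0) (Gup v (n+1)) p = pd (1,0) (pd (0,1) H) p := by
      show fderiv ℝ _ p _ = fderiv ℝ _ p _
      rw [Filter.EventuallyEq.fderiv_eq (Filter.eventuallyEq_of_mem mem eqΞ₂)]
    have h3 : pd (1,0) (pd (0,1) H) p = pd (0,1) (pd (1,0) H) p :=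
      pd_comm_s9 (hHs.contDiffAt mem) _ _
    have h4 : pd (0,1) (pd (1,0) H) p = pd (0,1) (fun q => -F q / q.2) p := by
      show fderiv ℝ _ p _ = fderiv ℝ _ p _
      rw [Filter.EventuallyEq.fderiv_eq (Filter.eventuallyEq_of_mem mem eqΞ₃)]
    have h5 : pd (0,1) (fun q => -F q / q.2) p = - pd (0,1) (fun q => F q / q.2) p := by
      have heq : (fun q : ℝ × ℝ => -F q / q.2) = fun q => -(F q / q.2) := by
        funext q; ring
      show fderiv ℝ _ p _ = - fderiv ℝ _ p _
      rw [heq, fderiv_fun_neg]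
      simp
    rw [h1, h2, h3, h4, h5]
    ring

end Main

theorem vekua_second_equation (Ξ : Set (ℝ × ℝ)) (hΞ : IsOpen Ξ)
    (hΞsub : Ξ ⊆ Set.univ ×ˢ Set.Ioi (0 : ℝ))
    (u v : ℝ × ℝ → ℝ) (hu : ContDiffOn ℝ (⊤ : ℕ∞) u Ξ) (hv : ContDiffOn ℝ (⊤ : ℕ∞) v Ξ)
    (hCR₁ : ∀ p ∈ Ξ, deriv (fun s => u (s, p.2)) p.1 = deriv (fun s => v (p.1, s)) p.2)
    (hCR₂ : ∀ p ∈ Ξ, deriv (fun s => u (p.1, s)) p.2 = -deriv (fun s => v (s, p.2)) p.1)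
    (n : ℕ) (hn : 1 ≤ n) (x₀ r : ℝ) (hmem : (x₀, r) ∈ Ξ) :
    deriv (fun s => Dup n (fun ρ => v (s, ρ)) r) x₀
        + deriv (fun s => Dlow n (fun ρ => u (x₀, ρ)) s) r = 0 := by
  have hu' : ContDiffOn ℝ ∞ u Ξ := hu.of_le (by simp)
  have hv' : ContDiffOn ℝ ∞ v Ξ := hv.of_le (by simp)
  have hkey := vekua_key hΞ hΞsub hu' hv' hCR₂ n (x₀, r) hmem
  have hGlows := Glow_contDiffOn hΞ hΞsub hu' n
  have hGups := (Gup_aux_contDiffOn hΞ hΞsub hv' n).1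
  have mem : Ξ ∈ nhds (x₀, r) := hΞ.mem_nhds hmem
  have hdG : DifferentiableAt ℝ (Glow u n) (x₀, r) :=
    (hGlows.contDiffAt mem).differentiableAt (by simp)
  have hdGu : DifferentiableAt ℝ (Gup v n) (x₀, r) :=
    (hGups.contDiffAt mem).differentiableAt (by simp)
  have e1 : deriv (fun s => Dup n (fun ρ => v (s, ρ)) r) x₀
      = pd (1,0) (Gup v n) (x₀, r) := pd1_eq hdGu
  have e2 : deriv (fun s => Dlow n (fun ρ => u (x₀, ρ)) s) r
      = pd (0,1) (Glow u n) (x₀, r) := pd2_eq hdG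
  rw [e1, e2]
  linarith
end
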